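/- arXiv:1309.3899 — 4 statements merged into one kernel-verified Lean document; each statement's English description precedes it below -/
import Mathlib

section
/- Fix m ∈ ℕ, s ∈ {0,…,m−1}, non-negative integers a, b with b ≤ m−1 and a ≥ s, and r > 0. Then (1/(2π)) ∬_{|w|≤r} (w+z)^a (w̄+z̄)^b w^s du dv = ∑_{n=s}^{m−1} (r^{2n+2}/(2(n−s)!(n+1)!)) · (∂/∂z)^{n−s}(∂/∂z̄)^n [z^a z̄^b] for every z ∈ ℂ, where w = u+iv. -/
open MeasureTheory Complex

noncomputable def besselJ (s : ℕ) (z : ℂ) : ℂ :=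
  ∑' j : ℕ, (-1) ^ j / ((j.factorial : ℂ) * ((j + s).factorial : ℂ)) * (z / 2) ^ (2 * j + s)

noncomputable def besselJdiv (s : ℕ) (w : ℂ) : ℂ :=
  ∑' j : ℕ, (-1) ^ j / ((j.factorial : ℂ) * ((j + s + 1).factorial : ℂ)) * (w / 2) ^ (2 * j) / 2 ^ (s + 1)

noncomputable def gfun (m s : ℕ) (r : ℝ) (z : ℂ) : ℂ :=
  besselJdiv s (r * z) -
    ∑ n ∈ Finset.Icc s (m - 1),
      ((r : ℂ) * z) ^ (2 * (n - s)) * (-1) ^ (n - s) /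
        (((n + 1).factorial : ℂ) * ((n - s).factorial : ℂ) * 2 ^ (2 * n - s + 1))

noncomputable def wderiv (f : ℂ → ℂ) (z : ℂ) : ℂ :=
  (1 / 2) * (fderiv ℝ f z 1 - Complex.I * fderiv ℝ f z Complex.I)

noncomputable def wderivBar (f : ℂ → ℂ) (z : ℂ) : ℂ :=
  (1 / 2) * (fderiv ℝ f z 1 + Complex.I * fderiv ℝ f z Complex.I)

/-- Left-hand side of the mean value equation (1). -/
noncomputable def mvLHS (m s : ℕ) (r : ℝ) (f : ℂ → ℂ) (z : ℂ) : ℂ :=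
  ∑ n ∈ Finset.Icc s (m - 1),
    ((r : ℂ) ^ (2 * n + 2) / (2 * ((n - s).factorial : ℂ) * ((n + 1).factorial : ℂ))) *
      (wderiv^[n - s] (wderivBar^[n] f)) z

/-- Right-hand side of the mean value equation (1). -/
noncomputable def mvRHS (s : ℕ) (r : ℝ) (f : ℂ → ℂ) (z : ℂ) : ℂ :=
  (1 / (2 * (Real.pi : ℂ))) * ∫ ζ in Metric.closedBall z r, f ζ * (ζ - z) ^ s

/-!
Expanding `(w + z)^a (w̄ + z̄)^b w^s` binomially reduces the integral to the moments
`∫_{|w| ≤ r} w^p w̄^q`, which in polar coordinates vanish unless `p = q` and then equal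
`π r^(2p+2) / (p+1)`. On the other side, `∂^k ∂̄^n (z^a z̄^b)` is a product of falling factorials
times `z^(a-k) z̄^(b-n)`. Both sides thus become the same finite sum over the power `k` of `w` taken
from `(w + z)^a`, whose terms vanish once `k > a` or `k + s > b`; so summing up to `n = m - 1 ≥ b`
loses nothing.
-/

open Set ComplexConjugate

theorem integral_closedBall_zero_eq_integral_polarCoord {E : Type*} [NormedAddCommGroup E]
    [NormedSpace ℝ E] (f : ℂ → E) (r : ℝ) :
    ∫ w in Metric.closedBall (0 : ℂ) r, f w =
      ∫ x in Ioc 0 r ×ˢ Ioo (-Real.pi) Real.pi, x.1 • f (Complex.polarCoord.symm x) := by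
  have htarget : polarCoord.target ∩ Iic r ×ˢ univ = Ioc 0 r ×ˢ Ioo (-Real.pi) Real.pi := by
    rw [polarCoord_target, prod_inter_prod, inter_univ, Ioi_inter_Iic]
  rw [← integral_indicator measurableSet_closedBall, ← Complex.integral_comp_polarCoord_symm,
    ← htarget, ← setIntegral_indicator (measurableSet_Iic.prod .univ)]
  refine setIntegral_congr_fun polarCoord.open_target.measurableSet fun x hx => ?_
  have hmem : Complex.polarCoord.symm x ∈ Metric.closedBall 0 r ↔ x ∈ Iic r ×ˢ univ := by
    simp [abs_of_pos (show 0 < x.1 from hx.1)]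
  by_cases h : x ∈ Iic r ×ˢ univ
  · rw [indicator_of_mem h, indicator_of_mem (hmem.2 h)]
  · rw [indicator_of_notMem h, indicator_of_notMem (mt hmem.1 h), smul_zero]

theorem integral_Ioo_exp_int_mul_I (n : ℤ) :
    ∫ θ in Ioo (-Real.pi) Real.pi, Complex.exp (n * θ * Complex.I) =
      if n = 0 then 2 * (Real.pi : ℂ) else 0 := by
  split_ifs with hn
  · simp [hn, Real.pi_nonneg, two_mul]
  · have hc : (n * Complex.I : ℂ) ≠ 0 := mul_ne_zero (by exact_mod_cast hn) Complex.I_ne_zero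
    rw [← integral_Ioc_eq_integral_Ioo,
      ← intervalIntegral.integral_of_le (by linarith [Real.pi_pos])]
    simp_rw [mul_right_comm _ _ Complex.I]
    rw [integral_exp_mul_complex hc, div_eq_zero_iff, sub_eq_zero]
    exact .inl (Complex.exp_eq_exp_iff_exists_int.2 ⟨n, by push_cast; ring⟩)

theorem polarCoord_symm_pow_mul_conj_pow (p q : ℕ) (x : ℝ × ℝ) :
    Complex.polarCoord.symm x ^ p * conj (Complex.polarCoord.symm x) ^ q =
      (x.1 : ℂ) ^ (p + q) * Complex.exp (((p - q : ℤ) : ℂ) * x.2 * Complex.I) := by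
  rw [Complex.polarCoord_symm_apply, Complex.ofReal_cos, Complex.ofReal_sin, ← Complex.exp_mul_I,
    map_mul, Complex.conj_ofReal, ← Complex.exp_conj]
  simp only [mul_pow, ← Complex.exp_nat_mul, map_mul, Complex.conj_ofReal, Complex.conj_I]
  rw [pow_add, mul_mul_mul_comm, ← Complex.exp_add]
  congr 2
  push_cast
  ring

theorem integral_closedBall_pow_mul_conj_pow (p q : ℕ) {r : ℝ} (hr : 0 ≤ r) :
    ∫ w in Metric.closedBall (0 : ℂ) r, w ^ p * conj w ^ q =
      if p = q then (Real.pi : ℂ) * r ^ (2 * p + 2) / (p + 1) else 0 := by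
  have hradial :
      ∫ ρ in Ioc 0 r, (ρ : ℂ) ^ (p + q + 1) = (r : ℂ) ^ (p + q + 2) / (p + q + 2) := by
    simp_rw [← intervalIntegral.integral_of_le hr, ← Complex.ofReal_pow,
      intervalIntegral.integral_ofReal, integral_pow]
    push_cast
    ring
  simp_rw [integral_closedBall_zero_eq_integral_polarCoord, polarCoord_symm_pow_mul_conj_pow,
    Complex.real_smul, ← mul_assoc, ← pow_succ']
  rw [Measure.volume_eq_prod, setIntegral_prod_mul (fun ρ : ℝ => (ρ : ℂ) ^ (p + q + 1))
    (fun θ : ℝ => Complex.exp (((p - q : ℤ) : ℂ) * θ * Complex.I)), hradial,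
    integral_Ioo_exp_int_mul_I]
  simp only [sub_eq_zero, Nat.cast_inj]
  split_ifs with hpq
  · subst hpq
    have : (p : ℂ) + 1 ≠ 0 := by exact_mod_cast p.succ_ne_zero
    rw [show (p : ℂ) + p + 2 = 2 * (p + 1) by ring, show p + p + 2 = 2 * p + 2 by ring]
    field_simp
  · exact mul_zero _

open Finset in
theorem integral_closedBall_sum_sum_mul_pow_mul_conj_pow {ι κ : Type*} (s : Finset ι)
    (t : Finset κ) (c : ι → κ → ℂ) (p : ι → ℕ) (q : κ → ℕ) {r : ℝ} (hr : 0 ≤ r) :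
    ∫ w in Metric.closedBall (0 : ℂ) r, ∑ i ∈ s, ∑ j ∈ t, c i j * (w ^ p i * conj w ^ q j) =
      ∑ i ∈ s, ∑ j ∈ t, c i j *
        if p i = q j then (Real.pi : ℂ) * r ^ (2 * p i + 2) / (p i + 1) else 0 := by
  have hint : ∀ i j, Integrable (fun w : ℂ => c i j * (w ^ p i * conj w ^ q j))
      (volume.restrict (Metric.closedBall 0 r)) := fun i j =>
    (by fun_prop : Continuous fun w : ℂ => c i j * (w ^ p i * conj w ^ q j)).continuousOn
      |>.integrableOn_compact (isCompact_closedBall _ _)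
  rw [integral_finsetSum _ fun i _ => integrable_finsetSum _ fun j _ => hint i j]
  refine sum_congr rfl fun i _ => ?_
  rw [integral_finsetSum _ fun j _ => hint i j]
  refine sum_congr rfl fun j _ => ?_
  rw [integral_const_mul, integral_closedBall_pow_mul_conj_pow _ _ hr]

noncomputable def monomialMeanTerm (a b s : ℕ) (r : ℝ) (z : ℂ) (k : ℕ) : ℂ :=
  a.choose k * b.choose (k + s) * z ^ (a - k) * conj z ^ (b - (k + s)) *
    r ^ (2 * (k + s) + 2) / (2 * (k + s + 1))

theorem monomialMeanTerm_eq_zero {a b s k : ℕ} (r : ℝ) (z : ℂ) (h : a < k ∨ b < k + s) :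
    monomialMeanTerm a b s r z k = 0 := by
  rcases h with h | h <;> simp [monomialMeanTerm, Nat.choose_eq_zero_of_lt h]

open Finset in
theorem integral_closedBall_add_pow_mul_conj_add_pow_mul_pow (a b s : ℕ) {r : ℝ} (hr : 0 ≤ r)
    (z : ℂ) :
    ∫ w in Metric.closedBall (0 : ℂ) r, (w + z) ^ a * (conj w + conj z) ^ b * w ^ s =
      2 * Real.pi * ∑ k ∈ range (a + 1), monomialMeanTerm a b s r z k := by
  have hexpand : ∀ w : ℂ, (w + z) ^ a * (conj w + conj z) ^ b * w ^ s =
      ∑ k ∈ range (a + 1), ∑ l ∈ range (b + 1),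
        a.choose k * z ^ (a - k) * (b.choose l * conj z ^ (b - l)) *
          (w ^ (k + s) * conj w ^ l) := by
    intro w
    rw [add_pow, add_pow, sum_mul_sum, sum_mul]
    refine sum_congr rfl fun k _ => ?_
    rw [sum_mul]
    refine sum_congr rfl fun l _ => ?_
    ring
  simp_rw [hexpand, integral_closedBall_sum_sum_mul_pow_mul_conj_pow _ _ _ _ _ hr, mul_ite,
    mul_zero, sum_ite_eq, mul_sum]
  refine sum_congr rfl fun k _ => ?_
  split_ifs with hks
  · have : (k : ℂ) + s + 1 ≠ 0 := by exact_mod_cast (k + s).succ_ne_zero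
    simp only [monomialMeanTerm, Nat.cast_add]
    field_simp
  · rw [monomialMeanTerm_eq_zero r z (.inr (by simpa using hks)), mul_zero]

theorem fderiv_pow_mul_conj_pow_apply (a b : ℕ) (z v : ℂ) :
    fderiv ℝ (fun ζ : ℂ => ζ ^ a * conj ζ ^ b) z v =
      a * z ^ (a - 1) * conj z ^ b * v + b * z ^ a * conj z ^ (b - 1) * conj v := by
  have hpow := ((hasDerivAt_pow a z).hasFDerivAt).restrictScalars ℝ
  have hconj_pow := (((hasDerivAt_pow b (conj z)).hasFDerivAt).restrictScalars ℝ).comp z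
    Complex.conjCLE.hasFDerivAt
  rw [HasFDerivAt.fderiv (f := fun ζ : ℂ => ζ ^ a * conj ζ ^ b) (hpow.mul hconj_pow)]
  simp only [add_apply, smul_apply, ContinuousLinearMap.comp_apply, ContinuousLinearEquiv.coe_coe,
    ContinuousAlgEquiv.coeCLE_apply, conjCAE_apply, ContinuousLinearMap.coe_restrictScalars',
    ContinuousLinearMap.toSpanSingleton_apply, smul_eq_mul]
  ring

theorem wderiv_eq_of_fderiv_apply {f : ℂ → ℂ} {z A B : ℂ}
    (hf : ∀ v, fderiv ℝ f z v = A * v + B * conj v) : wderiv f z = A := by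
  simp only [wderiv, hf, map_one, Complex.conj_I]
  linear_combination (B - A) / 2 * Complex.I_sq

theorem wderivBar_eq_of_fderiv_apply {f : ℂ → ℂ} {z A B : ℂ}
    (hf : ∀ v, fderiv ℝ f z v = A * v + B * conj v) : wderivBar f z = B := by
  simp only [wderivBar, hf, map_one, Complex.conj_I]
  linear_combination (A - B) / 2 * Complex.I_sq

theorem wderiv_const_smul (c : ℂ) (f : ℂ → ℂ) : wderiv (c • f) = c • wderiv f := by
  ext z
  simp only [wderiv, fderiv_const_smul_field, Pi.smul_apply, smul_apply, smul_eq_mul]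
  ring

theorem wderivBar_const_smul (c : ℂ) (f : ℂ → ℂ) : wderivBar (c • f) = c • wderivBar f := by
  ext z
  simp only [wderivBar, fderiv_const_smul_field, Pi.smul_apply, smul_apply, smul_eq_mul]
  ring

theorem iterate_wderiv_smul_pow_mul_conj_pow (c : ℂ) (a b k : ℕ) :
    wderiv^[k] (c • fun ζ : ℂ => ζ ^ a * conj ζ ^ b) =
      (c * a.descFactorial k) • fun ζ : ℂ => ζ ^ (a - k) * conj ζ ^ b := by
  induction k with
  | zero => simp
  | succ k ih =>
    rw [Function.iterate_succ_apply', ih, wderiv_const_smul, Nat.descFactorial_succ,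
      ← Nat.sub_sub]
    ext z
    simp only [Pi.smul_apply, smul_eq_mul,
      wderiv_eq_of_fderiv_apply (fderiv_pow_mul_conj_pow_apply _ _ z)]
    push_cast
    ring

theorem iterate_wderivBar_smul_pow_mul_conj_pow (c : ℂ) (a b n : ℕ) :
    wderivBar^[n] (c • fun ζ : ℂ => ζ ^ a * conj ζ ^ b) =
      (c * b.descFactorial n) • fun ζ : ℂ => ζ ^ a * conj ζ ^ (b - n) := by
  induction n with
  | zero => simp
  | succ n ih =>
    rw [Function.iterate_succ_apply', ih, wderivBar_const_smul, Nat.descFactorial_succ,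
      ← Nat.sub_sub]
    ext z
    simp only [Pi.smul_apply, smul_eq_mul,
      wderivBar_eq_of_fderiv_apply (fderiv_pow_mul_conj_pow_apply _ _ z)]
    push_cast
    ring

theorem iterate_wderiv_iterate_wderivBar_pow_mul_conj_pow (a b k n : ℕ) (z : ℂ) :
    wderiv^[k] (wderivBar^[n] fun ζ : ℂ => ζ ^ a * conj ζ ^ b) z =
      b.descFactorial n * a.descFactorial k * (z ^ (a - k) * conj z ^ (b - n)) := by
  rw [← one_smul ℂ fun ζ : ℂ => ζ ^ a * conj ζ ^ b, iterate_wderivBar_smul_pow_mul_conj_pow,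
    iterate_wderiv_smul_pow_mul_conj_pow, one_mul]
  rfl

open Finset in
theorem sum_Icc_mul_iterate_wderiv_iterate_wderivBar_pow_mul_conj_pow (a b s N : ℕ) (r : ℝ)
    (z : ℂ) :
    ∑ n ∈ Icc s N,
        ((r : ℂ) ^ (2 * n + 2) / (2 * ((n - s).factorial : ℂ) * ((n + 1).factorial : ℂ))) *
          (wderiv^[n - s] (wderivBar^[n] fun ζ : ℂ => ζ ^ a * conj ζ ^ b)) z =
      ∑ k ∈ range (N + 1 - s), monomialMeanTerm a b s r z k := by
  rw [← Finset.Ico_add_one_right_eq_Icc, sum_Ico_eq_sum_range]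
  refine sum_congr rfl fun k _ => ?_
  rw [iterate_wderiv_iterate_wderivBar_pow_mul_conj_pow, Nat.add_sub_cancel_left,
    Nat.descFactorial_eq_factorial_mul_choose, Nat.descFactorial_eq_factorial_mul_choose,
    Nat.factorial_succ, add_comm s k]
  have : (k : ℂ) + s + 1 ≠ 0 := by exact_mod_cast (k + s).succ_ne_zero
  have : (k.factorial : ℂ) ≠ 0 := by exact_mod_cast k.factorial_ne_zero
  have : ((k + s).factorial : ℂ) ≠ 0 := by exact_mod_cast (k + s).factorial_ne_zero
  simp only [monomialMeanTerm]
  push_cast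
  field_simp

theorem mean_value_on_monomials_general (m s : ℕ) (a b : ℕ) (hb : b ≤ m - 1)
    (r : ℝ) (hr : 0 < r) (z : ℂ) :
    (1 / (2 * (Real.pi : ℂ))) *
        ∫ w in Metric.closedBall (0 : ℂ) r,
          (w + z) ^ a * (starRingEnd ℂ w + starRingEnd ℂ z) ^ b * w ^ s =
      ∑ n ∈ Finset.Icc s (m - 1),
        ((r : ℂ) ^ (2 * n + 2) / (2 * ((n - s).factorial : ℂ) * ((n + 1).factorial : ℂ))) *
          (wderiv^[n - s] (wderivBar^[n] (fun ζ => ζ ^ a * (starRingEnd ℂ ζ) ^ b))) z := by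
  have hvanish : ∀ k ≥ min (a + 1) (b + 1 - s), monomialMeanTerm a b s r z k = 0 :=
    fun k hk => monomialMeanTerm_eq_zero r z (by omega)
  rw [integral_closedBall_add_pow_mul_conj_add_pow_mul_pow a b s hr.le z,
    sum_Icc_mul_iterate_wderiv_iterate_wderivBar_pow_mul_conj_pow,
    Finset.eventually_constant_sum hvanish (min_le_left _ _),
    Finset.eventually_constant_sum hvanish (n := m - 1 + 1 - s) (by omega)]
  field_simp

theorem mean_value_on_monomials (m s : ℕ) (hs : s < m) (a b : ℕ) (hb : b ≤ m - 1) (ha : s ≤ a)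
    (r : ℝ) (hr : 0 < r) (z : ℂ) :
    (1 / (2 * (Real.pi : ℂ))) *
        ∫ w in Metric.closedBall (0 : ℂ) r,
          (w + z) ^ a * (starRingEnd ℂ w + starRingEnd ℂ z) ^ b * w ^ s =
      ∑ n ∈ Finset.Icc s (m - 1),
        ((r : ℂ) ^ (2 * n + 2) / (2 * ((n - s).factorial : ℂ) * ((n + 1).factorial : ℂ))) *
          (wderiv^[n - s] (wderivBar^[n] (fun ζ => ζ ^ a * (starRingEnd ℂ ζ) ^ b))) z :=
  mean_value_on_monomials_general m s a b hb r hr z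
end

section
/- Let f be continuous on the disk D_R = {z ∈ ℂ : |z| < R}, and for k ∈ ℤ let f_k(ρ) = (1/(2π)) ∫_{−π}^{π} f(ρe^{it}) e^{−ikt} dt for 0 ≤ ρ < R. If f is smooth (C^∞) on D_R, then each function z ↦ f_k(|z|) e^{ik arg z} is smooth on D_R. -/
open MeasureTheory Complex

/-- The k-th angular Fourier coefficient of f. -/
noncomputable def fourierCoef (f : ℂ → ℂ) (k : ℤ) (ρ : ℝ) : ℂ :=
  (1 / (2 * (Real.pi : ℂ))) *
    ∫ t in (-Real.pi)..Real.pi,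
      f ((ρ : ℂ) * Complex.exp (Complex.I * t)) * Complex.exp (-Complex.I * k * t)


section Aux

open Function
open scoped ENNReal NNReal Topology

lemma fourier_eq (f : ℂ → ℂ) (k : ℤ) (z : ℂ) :
    fourierCoef f k ‖z‖ * Complex.exp (Complex.I * k * Complex.arg z) =
      (1 / (2 * (Real.pi : ℂ))) *
        ∫ t in (-Real.pi)..Real.pi,
          f (z * Complex.exp (Complex.I * t)) * Complex.exp (-Complex.I * k * t) := by
  set ρ : ℝ := ‖z‖ with hρ
  set φ : ℝ := Complex.arg z with hφ
  set h : ℝ → ℂ := fun u => f ((ρ : ℂ) * Complex.exp (Complex.I * u)) *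
    Complex.exp (-Complex.I * k * u) with hh
  have hz : (ρ : ℂ) * Complex.exp (Complex.I * (φ : ℂ)) = z := by
    rw [mul_comm Complex.I (φ : ℂ)]
    exact Complex.norm_mul_exp_arg_mul_I z
  have hper : Function.Periodic h (2 * Real.pi) := by
    intro u
    simp only [hh]
    have e1 : Complex.exp (Complex.I * ((u + 2 * Real.pi : ℝ) : ℂ)) =
        Complex.exp (Complex.I * (u : ℂ)) := by
      push_cast
      rw [mul_add, Complex.exp_add]
      have : Complex.I * (2 * (Real.pi : ℂ)) = 2 * (Real.pi : ℂ) * Complex.I := by ring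
      rw [this, Complex.exp_two_pi_mul_I, mul_one]
    have e2 : Complex.exp (-Complex.I * (k : ℂ) * ((u + 2 * Real.pi : ℝ) : ℂ)) =
        Complex.exp (-Complex.I * (k : ℂ) * (u : ℂ)) := by
      push_cast
      rw [mul_add, Complex.exp_add]
      have : -Complex.I * (k : ℂ) * (2 * (Real.pi : ℂ)) =
          ((-k : ℤ) : ℂ) * (2 * (Real.pi : ℂ) * Complex.I) := by push_cast; ring
      rw [this, Complex.exp_int_mul_two_pi_mul_I, mul_one]
    rw [e1, e2]
  have step1 : ∀ t ∈ Set.uIcc (-Real.pi) Real.pi,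
      f (z * Complex.exp (Complex.I * (t : ℂ))) * Complex.exp (-Complex.I * (k : ℂ) * (t : ℂ)) =
        h (t + φ) * Complex.exp (Complex.I * (k : ℂ) * (φ : ℂ)) := by
    intro t _
    simp only [hh]
    have ea : (ρ : ℂ) * Complex.exp (Complex.I * ((t + φ : ℝ) : ℂ)) =
        z * Complex.exp (Complex.I * (t : ℂ)) := by
      push_cast
      rw [mul_add, Complex.exp_add, ← hz]
      ring
    have eb : Complex.exp (-Complex.I * (k : ℂ) * ((t + φ : ℝ) : ℂ)) *
        Complex.exp (Complex.I * (k : ℂ) * (φ : ℂ)) =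
        Complex.exp (-Complex.I * (k : ℂ) * (t : ℂ)) := by
      rw [← Complex.exp_add]
      congr 1
      push_cast
      ring
    rw [ea, ← eb]
    ring
  have big : (∫ t in (-Real.pi)..Real.pi,
      f (z * Complex.exp (Complex.I * (t : ℂ))) * Complex.exp (-Complex.I * (k : ℂ) * (t : ℂ)))
      = Complex.exp (Complex.I * (k : ℂ) * (φ : ℂ)) * ∫ u in (-Real.pi)..Real.pi, h u := by
    rw [intervalIntegral.integral_congr step1]
    rw [intervalIntegral.integral_mul_const]
    have e3 : (∫ t in (-Real.pi)..Real.pi, h (t + φ)) =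
        ∫ u in (-Real.pi + φ)..(Real.pi + φ), h u :=
      intervalIntegral.integral_comp_add_right h φ
    have e4 : (∫ u in (-Real.pi + φ)..(Real.pi + φ), h u) =
        ∫ u in (-Real.pi)..Real.pi, h u := by
      have := hper.intervalIntegral_add_eq (-Real.pi + φ) (-Real.pi)
      have h1 : -Real.pi + φ + 2 * Real.pi = Real.pi + φ := by ring
      have h2 : -Real.pi + 2 * Real.pi = Real.pi := by ring
      rw [h1, h2] at this
      exact this
    rw [e3, e4, mul_comm]
  rw [fourierCoef, big]
  ring

end Aux

theorem fourier_component_smooth (R : ℝ) (hR : 0 < R) (f : ℂ → ℂ)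
    (hcont : ContinuousOn f (Metric.ball (0 : ℂ) R))
    (hf : ContDiffOn ℝ (⊤ : ℕ∞) f (Metric.ball (0 : ℂ) R)) (k : ℤ) :
    ContDiffOn ℝ (⊤ : ℕ∞)
      (fun z => fourierCoef f k ‖z‖ * Complex.exp (Complex.I * k * Complex.arg z))
      (Metric.ball (0 : ℂ) R) := by
  set Ω : Set ℂ := Metric.ball (0 : ℂ) R with hΩ
  have hΩopen : IsOpen Ω := Metric.isOpen_ball
  let χ : ContDiffBump (0 : ℝ) := ⟨4, 5, by norm_num, by norm_num⟩
  set g : ℂ → ℝ → ℂ := fun z y => ((χ y : ℝ) : ℂ) *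
    (f (z * Complex.exp (Complex.I * ((-y : ℝ) : ℂ))) *
      Complex.exp (-Complex.I * (k : ℂ) * ((-y : ℝ) : ℂ))) with hgdef
  set f₀ : ℝ → ℂ := Set.indicator (Set.Ioc (-Real.pi) Real.pi) (fun _ => (1 : ℂ)) with hf₀
  have hf₀int : LocallyIntegrable f₀ volume :=
    (locallyIntegrable_const (1 : ℂ)).indicator measurableSet_Ioc
  have hmaps : Set.MapsTo (fun p : ℂ × ℝ => p.1 * Complex.exp (Complex.I * ((-p.2 : ℝ) : ℂ)))
      (Ω ×ˢ (Set.univ : Set ℝ)) Ω := by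
    rintro ⟨zp, t⟩ ⟨hzp, -⟩
    simp only [hΩ, Metric.mem_ball, dist_zero_right] at hzp ⊢
    rw [norm_mul]
    have he : ‖Complex.exp (Complex.I * ((-t : ℝ) : ℂ))‖ = 1 := by
      rw [Complex.norm_exp]
      simp
    rw [he, mul_one]
    exact hzp
  have hofr : ContDiff ℝ (⊤ : ℕ∞) (fun x : ℝ => (x : ℂ)) := Complex.ofRealCLM.contDiff
  have hsm1 : ContDiff ℝ (⊤ : ℕ∞)
      (fun p : ℂ × ℝ => p.1 * Complex.exp (Complex.I * ((-p.2 : ℝ) : ℂ))) := by fun_prop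
  have hsm2 : ContDiff ℝ (⊤ : ℕ∞)
      (fun p : ℂ × ℝ => Complex.exp (-Complex.I * (k : ℂ) * ((-p.2 : ℝ) : ℂ))) := by fun_prop
  have hsm3 : ContDiff ℝ (⊤ : ℕ∞) (fun p : ℂ × ℝ => ((χ p.2 : ℝ) : ℂ)) :=
    Complex.ofRealCLM.contDiff.comp (χ.contDiff.comp contDiff_snd)
  have hG : ContDiffOn ℝ (⊤ : ℕ∞) (Function.uncurry g) (Ω ×ˢ (Set.univ : Set ℝ)) :=
    hsm3.contDiffOn.mul ((hf.comp hsm1.contDiffOn hmaps).mul hsm2.contDiffOn)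
  have hsupp : ∀ p, ∀ x, p ∈ Ω → x ∉ Metric.closedBall (0 : ℝ) 5 → g p x = 0 := by
    intro p x _ hx
    have h0 : χ x = 0 :=
      χ.zero_of_le_dist (lt_of_not_ge (fun h => hx (Metric.mem_closedBall.2 h))).le
    simp [hgdef, h0]
  have hconv := contDiffOn_convolution_right_with_param_comp (μ := volume)
    (ContinuousLinearMap.mul ℝ ℂ) (v := fun _ : ℂ => (0 : ℝ)) contDiffOn_const hΩopen
    (isCompact_closedBall (0 : ℝ) 5) hsupp hf₀int hG
  refine ((contDiffOn_const (c := (1 / (2 * (Real.pi : ℂ))))).mul hconv).congr ?_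
  intro z _
  rw [fourier_eq f k z]
  congr 1
  simp only [convolution, ContinuousLinearMap.mul_apply']
  have hind : (fun t => f₀ t * g z (0 - t)) =
      Set.indicator (Set.Ioc (-Real.pi) Real.pi) (fun t => g z (0 - t)) := by
    funext t
    by_cases ht : t ∈ Set.Ioc (-Real.pi) Real.pi <;> simp [hf₀, ht]
  rw [hind, integral_indicator measurableSet_Ioc,
    intervalIntegral.integral_of_le (by linarith [Real.pi_pos])]
  refine setIntegral_congr_fun measurableSet_Ioc fun t ht => ?_
  have hχ : χ (-t) = 1 := by
    apply χ.one_of_mem_closedBall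
    rw [Metric.mem_closedBall, Real.dist_eq, sub_zero, abs_neg, abs_le]
    obtain ⟨h1, h2⟩ := ht
    have := Real.pi_le_four
    show -4 ≤ t ∧ t ≤ 4
    constructor <;> linarith
  simp [hgdef, hχ]
end

section
/- Fix m ∈ ℕ, s ∈ {0,…,m−1}, r > 0, and R > r. Suppose f is continuous on D_R = {|z| < R} and satisfies the mean value equation ∑_{n=s}^{m−1} (r^{2n+2}/(2(n−s)!(n+1)!)) (∂/∂z)^{n−s}(∂/∂z̄)^n f(z) = (1/(2π)) ∬_{|ζ−z|≤r} f(ζ)(ζ−z)^s dξ dη for all |z| < R − r (f assumed smooth enough for the left side). Then for each k ∈ ℤ, the angular Fourier component F_k(z) = f_k(|z|) e^{ik arg z} also satisfies the same mean value equation for |z| < R − r. -/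
open MeasureTheory Complex

open Metric

lemma wderiv_congr {U : Set ℂ} (hU : IsOpen U) {g₁ g₂ : ℂ → ℂ} (h : Set.EqOn g₁ g₂ U)
    {x : ℂ} (hx : x ∈ U) : wderiv g₁ x = wderiv g₂ x := by
  have : fderiv ℝ g₁ x = fderiv ℝ g₂ x :=
    (Filter.eventuallyEq_of_mem (hU.mem_nhds hx) h).fderiv_eq
  simp [wderiv, this]

lemma wderivBar_congr {U : Set ℂ} (hU : IsOpen U) {g₁ g₂ : ℂ → ℂ} (h : Set.EqOn g₁ g₂ U)
    {x : ℂ} (hx : x ∈ U) : wderivBar g₁ x = wderivBar g₂ x := by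
  have : fderiv ℝ g₁ x = fderiv ℝ g₂ x :=
    (Filter.eventuallyEq_of_mem (hU.mem_nhds hx) h).fderiv_eq
  simp [wderivBar, this]

lemma wderiv_iter_congr {U : Set ℂ} (hU : IsOpen U) {g₁ g₂ : ℂ → ℂ} (h : Set.EqOn g₁ g₂ U)
    (p : ℕ) : Set.EqOn (wderiv^[p] g₁) (wderiv^[p] g₂) U := by
  induction p with
  | zero => simpa using h
  | succ p ih =>
    intro x hx
    rw [Function.iterate_succ_apply', Function.iterate_succ_apply']
    exact wderiv_congr hU ih hx

lemma contDiffOn_wderiv {U : Set ℂ} (hU : IsOpen U) {g : ℂ → ℂ}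
    (hg : ContDiffOn ℝ (⊤ : ℕ∞) g U) : ContDiffOn ℝ (⊤ : ℕ∞) (wderiv g) U := by
  have hd : ContDiffOn ℝ (⊤ : ℕ∞) (fun x => fderiv ℝ g x) U :=
    hg.fderiv_of_isOpen hU (by simp)
  have h1 : ContDiffOn ℝ (⊤ : ℕ∞) (fun x => fderiv ℝ g x 1) U := hd.clm_apply contDiffOn_const
  have hI : ContDiffOn ℝ (⊤ : ℕ∞) (fun x => fderiv ℝ g x Complex.I) U := hd.clm_apply contDiffOn_const
  have : ContDiffOn ℝ (⊤ : ℕ∞) (fun z => (1/2 : ℂ) * (fderiv ℝ g z 1 - Complex.I * fderiv ℝ g z Complex.I)) U :=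
    contDiffOn_const.mul (h1.sub (contDiffOn_const.mul hI))
  exact this

lemma contDiffOn_wderivBar {U : Set ℂ} (hU : IsOpen U) {g : ℂ → ℂ}
    (hg : ContDiffOn ℝ (⊤ : ℕ∞) g U) : ContDiffOn ℝ (⊤ : ℕ∞) (wderivBar g) U := by
  have hd : ContDiffOn ℝ (⊤ : ℕ∞) (fun x => fderiv ℝ g x) U :=
    hg.fderiv_of_isOpen hU (by simp)
  have h1 : ContDiffOn ℝ (⊤ : ℕ∞) (fun x => fderiv ℝ g x 1) U := hd.clm_apply contDiffOn_const
  have hI : ContDiffOn ℝ (⊤ : ℕ∞) (fun x => fderiv ℝ g x Complex.I) U := hd.clm_apply contDiffOn_const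
  exact contDiffOn_const.mul (h1.add (contDiffOn_const.mul hI))

lemma contDiffOn_wderivBar_iter {U : Set ℂ} (hU : IsOpen U) {g : ℂ → ℂ}
    (hg : ContDiffOn ℝ (⊤ : ℕ∞) g U) (n : ℕ) : ContDiffOn ℝ (⊤ : ℕ∞) (wderivBar^[n] g) U := by
  induction n with
  | zero => simpa using hg
  | succ n ih => rw [Function.iterate_succ_apply']; exact contDiffOn_wderivBar hU ih

lemma contDiffOn_wderiv_iter {U : Set ℂ} (hU : IsOpen U) {g : ℂ → ℂ}
    (hg : ContDiffOn ℝ (⊤ : ℕ∞) g U) (n : ℕ) : ContDiffOn ℝ (⊤ : ℕ∞) (wderiv^[n] g) U := by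
  induction n with
  | zero => simpa using hg
  | succ n ih => rw [Function.iterate_succ_apply']; exact contDiffOn_wderiv hU ih

noncomputable def cmulCLM (c : ℂ) : ℂ →L[ℝ] ℂ :=
  (ContinuousLinearMap.mul ℂ ℂ c).restrictScalars ℝ

lemma cmulCLM_apply (c v : ℂ) : cmulCLM c v = c * v := rfl

lemma norm_cmulCLM_le (c : ℂ) : ‖cmulCLM c‖ ≤ ‖c‖ := by
  refine ContinuousLinearMap.opNorm_le_bound _ (norm_nonneg c) fun v => ?_
  rw [cmulCLM_apply, norm_mul]

lemma continuous_cmulCLM : Continuous cmulCLM := by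
  have : LipschitzWith 1 cmulCLM := by
    refine LipschitzWith.of_dist_le_mul fun a b => ?_
    rw [dist_eq_norm, dist_eq_norm]
    have h : cmulCLM a - cmulCLM b = cmulCLM (a - b) := by
      ext v; simp [cmulCLM_apply, sub_mul]
    rw [h]
    simpa using norm_cmulCLM_le (a - b)
  exact this.continuous

noncomputable def Aint (j : ℤ) (g : ℂ → ℂ) (w : ℂ) : ℂ :=
  (1 / (2 * (Real.pi : ℂ))) *
    ∫ t in (-Real.pi)..Real.pi,
      g (Complex.exp (Complex.I * t) * w) * Complex.exp (-Complex.I * j * t)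

noncomputable def Fprime (g : ℂ → ℂ) (j : ℤ) (x : ℂ) (t : ℝ) : ℂ →L[ℝ] ℂ :=
  Complex.exp (-Complex.I * j * t) •
    ((fderiv ℝ g (Complex.exp (Complex.I * t) * x)).comp
      (cmulCLM (Complex.exp (Complex.I * t))))

lemma intervalIntegral_clm_apply {a b : ℝ} {φ : ℝ → ℂ →L[ℝ] ℂ}
    (h : IntervalIntegrable φ volume a b) (v : ℂ) :
    (∫ t in a..b, φ t) v = ∫ t in a..b, φ t v := by
  rw [intervalIntegral, intervalIntegral, ContinuousLinearMap.sub_apply,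
    ContinuousLinearMap.integral_apply h.1, ContinuousLinearMap.integral_apply h.2]

lemma continuous_rot (x : ℂ) : Continuous fun t : ℝ => Complex.exp (Complex.I * t) * x :=
  (Complex.continuous_exp.comp (continuous_const.mul Complex.continuous_ofReal)).mul
    continuous_const

lemma continuous_weight (j : ℤ) : Continuous fun t : ℝ => Complex.exp (-Complex.I * j * t) :=
  Complex.continuous_exp.comp ((continuous_const.mul Complex.continuous_ofReal))

lemma abs_rot (t : ℝ) : ‖Complex.exp (Complex.I * t)‖ = 1 := by
  rw [Complex.norm_exp]; simp

lemma continuous_Fprime {R : ℝ} {g : ℂ → ℂ} (hg : ContDiffOn ℝ (⊤ : ℕ∞) g (ball 0 R)) (j : ℤ)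
    {x : ℂ} (hx : ‖x‖ < R) : Continuous (Fprime g j x) := by
  have hmem : ∀ t : ℝ, Complex.exp (Complex.I * t) * x ∈ ball (0 : ℂ) R := by
    intro t
    simp only [mem_ball, Complex.dist_eq, sub_zero, norm_mul, abs_rot, one_mul]
    exact hx
  have hfd : ContinuousOn (fderiv ℝ g) (ball (0:ℂ) R) :=
    hg.continuousOn_fderiv_of_isOpen isOpen_ball (by simp)
  have c1 : Continuous fun t : ℝ => fderiv ℝ g (Complex.exp (Complex.I * t) * x) :=
    hfd.comp_continuous (continuous_rot x) hmem
  have c2 : Continuous fun t : ℝ => cmulCLM (Complex.exp (Complex.I * t)) :=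
    continuous_cmulCLM.comp (Complex.continuous_exp.comp
      (continuous_const.mul Complex.continuous_ofReal))
  exact ((continuous_weight j).smul (c1.clm_comp c2))

lemma hasFDerivAt_Aint {R : ℝ} {g : ℂ → ℂ} (hg : ContDiffOn ℝ (⊤ : ℕ∞) g (ball 0 R)) (j : ℤ)
    {x₀ : ℂ} (hx₀ : x₀ ∈ ball 0 R) :
    HasFDerivAt (Aint j g)
      ((1 / (2 * (Real.pi : ℂ))) • ∫ t in (-Real.pi)..Real.pi, Fprime g j x₀ t) x₀ := by
  have hx₀R : ‖x₀‖ < R := by simpa [Complex.dist_eq] using hx₀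
  obtain ⟨ε, ε_pos, hεlt⟩ : ∃ ε > 0, ‖x₀‖ + ε < R :=
    ⟨(R - ‖x₀‖) / 2, by linarith, by linarith⟩
  have habsle : ∀ x : ℂ, dist x x₀ ≤ ε → ‖x‖ ≤ ‖x₀‖ + ε := by
    intro x hx
    have h0 : ‖x - x₀‖ ≤ ε := by rwa [Complex.dist_eq] at hx
    calc ‖x‖ = ‖x₀ + (x - x₀)‖ := by ring_nf
    _ ≤ ‖x₀‖ + ‖x - x₀‖ := norm_add_le _ _
    _ ≤ ‖x₀‖ + ε := by linarith
  have hmem : ∀ (x : ℂ), dist x x₀ ≤ ε → ∀ t : ℝ,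
      Complex.exp (Complex.I * t) * x ∈ ball (0 : ℂ) R := by
    intro x hx t
    simp only [mem_ball, Complex.dist_eq, sub_zero, norm_mul, abs_rot, one_mul]
    linarith [habsle x hx]
  have hfd : ContinuousOn (fderiv ℝ g) (ball (0:ℂ) R) :=
    hg.continuousOn_fderiv_of_isOpen isOpen_ball (by simp)
  obtain ⟨C, hC⟩ : ∃ C, ∀ u ∈ closedBall (0:ℂ) (‖x₀‖ + ε), ‖fderiv ℝ g u‖ ≤ C := by
    apply (isCompact_closedBall (0:ℂ) (‖x₀‖ + ε)).exists_bound_of_continuousOn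
    apply hfd.mono
    intro u hu
    simp only [mem_closedBall, mem_ball] at *
    linarith
  have hFcont : ∀ x : ℂ, dist x x₀ ≤ ε →
      Continuous fun t : ℝ => g (Complex.exp (Complex.I * t) * x) *
        Complex.exp (-Complex.I * j * t) := by
    intro x hx
    exact (hg.continuousOn.comp_continuous (continuous_rot x) (hmem x hx)).mul
      (continuous_weight j)
  have main := intervalIntegral.hasFDerivAt_integral_of_dominated_of_fderiv_le
    (F := fun (x : ℂ) (t : ℝ) => g (Complex.exp (Complex.I * t) * x) *
        Complex.exp (-Complex.I * j * t))
    (F' := fun x t => Fprime g j x t) (x₀ := x₀) (a := -Real.pi) (b := Real.pi) (μ := volume)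
    (bound := fun _ => C * 1) (Metric.ball_mem_nhds x₀ ε_pos)
    ?_ ?_ ?_ ?_ ?_ ?_
  · have h2 := main.const_smul ((1 : ℂ) / (2 * (Real.pi : ℂ)))
    have h3 : (fun x => (1 / (2 * (Real.pi:ℂ))) •
        ∫ t in (-Real.pi)..Real.pi, g (Complex.exp (Complex.I * t) * x) *
          Complex.exp (-Complex.I * j * t)) = Aint j g := by
      funext x; simp [Aint, smul_eq_mul]
    rw [← h3]; exact h2
  · filter_upwards [Metric.ball_mem_nhds x₀ ε_pos] with x hx
    exact ((hFcont x (le_of_lt (by simpa [dist_comm] using hx))).aestronglyMeasurable)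
  · exact (hFcont x₀ (by simp [le_of_lt ε_pos])).intervalIntegrable _ _
  · exact (continuous_Fprime hg j hx₀R).aestronglyMeasurable
  · refine Filter.Eventually.of_forall fun t _ => fun x hx => ?_
    have hx' : dist x x₀ ≤ ε := le_of_lt (by simpa [dist_comm] using hx)
    have hu : Complex.exp (Complex.I * t) * x ∈ closedBall (0:ℂ) (‖x₀‖ + ε) := by
      simp only [mem_closedBall, Complex.dist_eq, sub_zero, norm_mul, abs_rot, one_mul]
      exact habsle x hx'
    unfold Fprime
    calc ‖Complex.exp (-Complex.I * j * t) •
          ((fderiv ℝ g (Complex.exp (Complex.I * t) * x)).comp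
            (cmulCLM (Complex.exp (Complex.I * t))))‖
        = ‖Complex.exp (-Complex.I * j * t)‖ *
          ‖(fderiv ℝ g (Complex.exp (Complex.I * t) * x)).comp
            (cmulCLM (Complex.exp (Complex.I * t)))‖ := norm_smul _ _
    _ ≤ 1 * (‖fderiv ℝ g (Complex.exp (Complex.I * t) * x)‖ *
          ‖cmulCLM (Complex.exp (Complex.I * t))‖) := by
        apply mul_le_mul ?_ (ContinuousLinearMap.opNorm_comp_le _ _) (norm_nonneg _)
          (by norm_num)
        rw [Complex.norm_exp]
        simp
    _ ≤ 1 * (C * 1) := by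
        rw [one_mul, one_mul]
        apply mul_le_mul (hC _ hu) ?_ (norm_nonneg _)
          ((norm_nonneg _).trans (hC _ hu))
        calc ‖cmulCLM (Complex.exp (Complex.I * t))‖ ≤
            ‖Complex.exp (Complex.I * t)‖ := norm_cmulCLM_le _
        _ = 1 := abs_rot t
    _ = C * 1 := one_mul _
  · exact intervalIntegrable_const
  · refine Filter.Eventually.of_forall fun t _ => fun x hx => ?_
    have hx' : dist x x₀ ≤ ε := le_of_lt (by simpa [dist_comm] using hx)
    have hu : Complex.exp (Complex.I * t) * x ∈ ball (0:ℂ) R := hmem x hx' t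
    have hgd : HasFDerivAt g (fderiv ℝ g (Complex.exp (Complex.I * t) * x))
        (Complex.exp (Complex.I * t) * x) :=
      ((hg.contDiffAt (isOpen_ball.mem_nhds hu)).differentiableAt (by simp)).hasFDerivAt
    have hlin : HasFDerivAt (fun y : ℂ => Complex.exp (Complex.I * t) * y)
        (cmulCLM (Complex.exp (Complex.I * t))) x := by
      exact (cmulCLM (Complex.exp (Complex.I * t))).hasFDerivAt (x := x)
    have hcomp := hgd.comp x hlin
    have hfin := hcomp.const_mul (Complex.exp (-Complex.I * j * t))
    unfold Fprime
    simpa [mul_comm] using hfin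

lemma exp_I_decomp (t : ℝ) : Complex.exp (Complex.I * t)
    = (Real.cos t : ℂ) + (Real.sin t : ℂ) * Complex.I := by
  rw [mul_comm, Complex.exp_mul_I, Complex.ofReal_cos, Complex.ofReal_sin]

lemma exp_neg_I_decomp (t : ℝ) : Complex.exp (-Complex.I * t)
    = (Real.cos t : ℂ) - (Real.sin t : ℂ) * Complex.I := by
  have h : -Complex.I * (t : ℂ) = ((-t : ℝ) : ℂ) * Complex.I := by push_cast; ring
  rw [h, Complex.exp_mul_I]
  push_cast
  rw [Complex.cos_neg, Complex.sin_neg]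
  ring

lemma D_decomp (D : ℂ →L[ℝ] ℂ) (a b : ℝ) :
    D ((a:ℂ) + (b:ℂ) * Complex.I) = (a:ℂ) * D 1 + (b:ℂ) * D Complex.I := by
  have h : ((a:ℂ) + (b:ℂ) * Complex.I) = a • (1:ℂ) + b • Complex.I := by
    simp [Complex.real_smul]
  rw [h, map_add, D.map_smul, D.map_smul]
  simp [Complex.real_smul]

lemma key_id (D : ℂ →L[ℝ] ℂ) (t : ℝ) :
    (1/2 : ℂ) * (D (Complex.exp (Complex.I * t)) -
      Complex.I * D (Complex.exp (Complex.I * t) * Complex.I))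
    = Complex.exp (Complex.I * t) * ((1/2 : ℂ) * (D 1 - Complex.I * D Complex.I)) := by
  have he := exp_I_decomp t
  have hI : Complex.exp (Complex.I * t) * Complex.I
      = ((-Real.sin t : ℝ) : ℂ) + ((Real.cos t : ℝ) : ℂ) * Complex.I := by
    rw [he, Complex.ofReal_neg]; linear_combination (Real.sin t : ℂ) * Complex.I_sq
  have h1 : D (Complex.exp (Complex.I * t))
      = (Real.cos t : ℂ) * D 1 + (Real.sin t : ℂ) * D Complex.I := by
    rw [he]; exact D_decomp D _ _
  have h2 : D (Complex.exp (Complex.I * t) * Complex.I)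
      = ((-Real.sin t : ℝ) : ℂ) * D 1 + (Real.cos t : ℂ) * D Complex.I := by
    rw [hI]; exact D_decomp D _ _
  rw [h1, h2, he, Complex.ofReal_neg]
  ring_nf
  rw [Complex.I_sq]
  ring

lemma key_id_bar (D : ℂ →L[ℝ] ℂ) (t : ℝ) :
    (1/2 : ℂ) * (D (Complex.exp (Complex.I * t)) +
      Complex.I * D (Complex.exp (Complex.I * t) * Complex.I))
    = Complex.exp (-Complex.I * t) * ((1/2 : ℂ) * (D 1 + Complex.I * D Complex.I)) := by
  have he := exp_I_decomp t
  have hI : Complex.exp (Complex.I * t) * Complex.I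
      = ((-Real.sin t : ℝ) : ℂ) + ((Real.cos t : ℝ) : ℂ) * Complex.I := by
    rw [he, Complex.ofReal_neg]; linear_combination (Real.sin t : ℂ) * Complex.I_sq
  have h1 : D (Complex.exp (Complex.I * t))
      = (Real.cos t : ℂ) * D 1 + (Real.sin t : ℂ) * D Complex.I := by
    rw [he]; exact D_decomp D _ _
  have h2 : D (Complex.exp (Complex.I * t) * Complex.I)
      = ((-Real.sin t : ℝ) : ℂ) * D 1 + (Real.cos t : ℂ) * D Complex.I := by
    rw [hI]; exact D_decomp D _ _
  rw [h1, h2, exp_neg_I_decomp, Complex.ofReal_neg]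
  ring_nf
  rw [Complex.I_sq]
  ring

lemma Fprime_apply (g : ℂ → ℂ) (j : ℤ) (x : ℂ) (t : ℝ) (v : ℂ) :
    Fprime g j x t v = Complex.exp (-Complex.I * j * t) *
      fderiv ℝ g (Complex.exp (Complex.I * t) * x) (Complex.exp (Complex.I * t) * v) := rfl

lemma wderiv_Aint {R : ℝ} {g : ℂ → ℂ} (hg : ContDiffOn ℝ (⊤ : ℕ∞) g (ball 0 R)) (j : ℤ)
    {x₀ : ℂ} (hx₀ : x₀ ∈ ball 0 R) :
    wderiv (Aint j g) x₀ = Aint (j - 1) (wderiv g) x₀ := by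
  have hx₀R : ‖x₀‖ < R := by simpa [Complex.dist_eq] using hx₀
  have hint : IntervalIntegrable (Fprime g j x₀) volume (-Real.pi) Real.pi :=
    (continuous_Fprime hg j hx₀R).intervalIntegrable _ _
  have hD := (hasFDerivAt_Aint hg j hx₀).fderiv
  have hA : IntervalIntegrable (fun t => Fprime g j x₀ t 1) volume (-Real.pi) Real.pi :=
    ((continuous_Fprime hg j hx₀R).clm_apply continuous_const).intervalIntegrable _ _
  have hB : IntervalIntegrable (fun t => Fprime g j x₀ t Complex.I) volume (-Real.pi) Real.pi :=
    ((continuous_Fprime hg j hx₀R).clm_apply continuous_const).intervalIntegrable _ _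
  have happ1 : fderiv ℝ (Aint j g) x₀ 1
      = (1 / (2 * (Real.pi:ℂ))) * ∫ t in (-Real.pi)..Real.pi, Fprime g j x₀ t 1 := by
    rw [hD, ContinuousLinearMap.smul_apply, intervalIntegral_clm_apply hint, smul_eq_mul]
  have happI : fderiv ℝ (Aint j g) x₀ Complex.I
      = (1 / (2 * (Real.pi:ℂ))) * ∫ t in (-Real.pi)..Real.pi, Fprime g j x₀ t Complex.I := by
    rw [hD, ContinuousLinearMap.smul_apply, intervalIntegral_clm_apply hint, smul_eq_mul]
  have hptw : ∀ t : ℝ, (1/2 : ℂ) * (Fprime g j x₀ t 1 - Complex.I * Fprime g j x₀ t Complex.I)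
      = wderiv g (Complex.exp (Complex.I * t) * x₀) * Complex.exp (-Complex.I * ((j:ℂ) - 1) * t) := by
    intro t
    have e1 : Complex.exp (-Complex.I * ((j:ℂ) - 1) * t)
        = Complex.exp (-Complex.I * j * t) * Complex.exp (Complex.I * t) := by
      rw [← Complex.exp_add]; congr 1; ring
    rw [Fprime_apply, Fprime_apply, mul_one, e1]
    have hk := key_id (fderiv ℝ g (Complex.exp (Complex.I * t) * x₀)) t
    unfold wderiv
    linear_combination Complex.exp (-Complex.I * (j:ℂ) * t) * hk
  have hsplit : ∫ t in (-Real.pi)..Real.pi,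
      wderiv g (Complex.exp (Complex.I * t) * x₀) * Complex.exp (-Complex.I * ((j:ℂ) - 1) * t)
      = (1/2 : ℂ) * ((∫ t in (-Real.pi)..Real.pi, Fprime g j x₀ t 1)
          - Complex.I * ∫ t in (-Real.pi)..Real.pi, Fprime g j x₀ t Complex.I) := by
    rw [← intervalIntegral.integral_const_mul Complex.I fun t => Fprime g j x₀ t Complex.I,
      ← intervalIntegral.integral_sub hA (hB.const_mul Complex.I),
      ← intervalIntegral.integral_const_mul]
    exact intervalIntegral.integral_congr fun t _ => (hptw t).symm
  have hcast : ∀ t : ℝ, Complex.exp (-Complex.I * (((j - 1 : ℤ)):ℂ) * t)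
      = Complex.exp (-Complex.I * ((j:ℂ) - 1) * t) := by intro t; push_cast; ring_nf
  have h6 : Aint (j - 1) (wderiv g) x₀
      = (1 / (2 * (Real.pi:ℂ))) * ∫ t in (-Real.pi)..Real.pi,
          wderiv g (Complex.exp (Complex.I * t) * x₀) *
            Complex.exp (-Complex.I * ((j:ℂ) - 1) * t) := by
    rw [Aint]; congr 1; exact intervalIntegral.integral_congr fun t _ => by rw [hcast t]
  rw [h6, hsplit]
  unfold wderiv
  rw [happ1, happI]
  ring

lemma wderivBar_Aint {R : ℝ} {g : ℂ → ℂ} (hg : ContDiffOn ℝ (⊤ : ℕ∞) g (ball 0 R)) (j : ℤ)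
    {x₀ : ℂ} (hx₀ : x₀ ∈ ball 0 R) :
    wderivBar (Aint j g) x₀ = Aint (j + 1) (wderivBar g) x₀ := by
  have hx₀R : ‖x₀‖ < R := by simpa [Complex.dist_eq] using hx₀
  have hint : IntervalIntegrable (Fprime g j x₀) volume (-Real.pi) Real.pi :=
    (continuous_Fprime hg j hx₀R).intervalIntegrable _ _
  have hD := (hasFDerivAt_Aint hg j hx₀).fderiv
  have hA : IntervalIntegrable (fun t => Fprime g j x₀ t 1) volume (-Real.pi) Real.pi :=
    ((continuous_Fprime hg j hx₀R).clm_apply continuous_const).intervalIntegrable _ _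
  have hB : IntervalIntegrable (fun t => Fprime g j x₀ t Complex.I) volume (-Real.pi) Real.pi :=
    ((continuous_Fprime hg j hx₀R).clm_apply continuous_const).intervalIntegrable _ _
  have happ1 : fderiv ℝ (Aint j g) x₀ 1
      = (1 / (2 * (Real.pi:ℂ))) * ∫ t in (-Real.pi)..Real.pi, Fprime g j x₀ t 1 := by
    rw [hD, ContinuousLinearMap.smul_apply, intervalIntegral_clm_apply hint, smul_eq_mul]
  have happI : fderiv ℝ (Aint j g) x₀ Complex.I
      = (1 / (2 * (Real.pi:ℂ))) * ∫ t in (-Real.pi)..Real.pi, Fprime g j x₀ t Complex.I := by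
    rw [hD, ContinuousLinearMap.smul_apply, intervalIntegral_clm_apply hint, smul_eq_mul]
  have hptw : ∀ t : ℝ, (1/2 : ℂ) * (Fprime g j x₀ t 1 + Complex.I * Fprime g j x₀ t Complex.I)
      = wderivBar g (Complex.exp (Complex.I * t) * x₀) *
          Complex.exp (-Complex.I * ((j:ℂ) + 1) * t) := by
    intro t
    have e1 : Complex.exp (-Complex.I * ((j:ℂ) + 1) * t)
        = Complex.exp (-Complex.I * j * t) * Complex.exp (-Complex.I * t) := by
      rw [← Complex.exp_add]; congr 1; ring
    rw [Fprime_apply, Fprime_apply, mul_one, e1]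
    have hk := key_id_bar (fderiv ℝ g (Complex.exp (Complex.I * t) * x₀)) t
    unfold wderivBar
    linear_combination Complex.exp (-Complex.I * (j:ℂ) * t) * hk
  have hsplit : ∫ t in (-Real.pi)..Real.pi,
      wderivBar g (Complex.exp (Complex.I * t) * x₀) * Complex.exp (-Complex.I * ((j:ℂ) + 1) * t)
      = (1/2 : ℂ) * ((∫ t in (-Real.pi)..Real.pi, Fprime g j x₀ t 1)
          + Complex.I * ∫ t in (-Real.pi)..Real.pi, Fprime g j x₀ t Complex.I) := by
    rw [← intervalIntegral.integral_const_mul Complex.I fun t => Fprime g j x₀ t Complex.I,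
      ← intervalIntegral.integral_add hA (hB.const_mul Complex.I),
      ← intervalIntegral.integral_const_mul]
    exact intervalIntegral.integral_congr fun t _ => (hptw t).symm
  have hcast : ∀ t : ℝ, Complex.exp (-Complex.I * (((j + 1 : ℤ)):ℂ) * t)
      = Complex.exp (-Complex.I * ((j:ℂ) + 1) * t) := by intro t; push_cast; ring_nf
  have h6 : Aint (j + 1) (wderivBar g) x₀
      = (1 / (2 * (Real.pi:ℂ))) * ∫ t in (-Real.pi)..Real.pi,
          wderivBar g (Complex.exp (Complex.I * t) * x₀) *
            Complex.exp (-Complex.I * ((j:ℂ) + 1) * t) := by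
    rw [Aint]; congr 1; exact intervalIntegral.integral_congr fun t _ => by rw [hcast t]
  rw [h6, hsplit]
  unfold wderivBar
  rw [happ1, happI]
  ring

lemma Aint_wderivBar_iter {R : ℝ} {g : ℂ → ℂ} (hg : ContDiffOn ℝ (⊤ : ℕ∞) g (ball 0 R)) (n : ℕ) (j : ℤ) :
    Set.EqOn (wderivBar^[n] (Aint j g)) (Aint (j + n) (wderivBar^[n] g)) (ball (0:ℂ) R) := by
  induction n with
  | zero => intro x hx; simp
  | succ n ih =>
    intro x hx
    rw [Function.iterate_succ_apply', wderivBar_congr isOpen_ball ih hx,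
      wderivBar_Aint (contDiffOn_wderivBar_iter isOpen_ball hg n) (j + n) hx]
    have : (j + n + 1 : ℤ) = j + ((n + 1 : ℕ) : ℤ) := by push_cast; ring
    rw [this, Function.iterate_succ_apply']

lemma Aint_wderiv_iter {R : ℝ} {g : ℂ → ℂ} (hg : ContDiffOn ℝ (⊤ : ℕ∞) g (ball 0 R)) (n : ℕ) (j : ℤ) :
    Set.EqOn (wderiv^[n] (Aint j g)) (Aint (j - n) (wderiv^[n] g)) (ball (0:ℂ) R) := by
  induction n with
  | zero => intro x hx; simp
  | succ n ih =>
    intro x hx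
    rw [Function.iterate_succ_apply', wderiv_congr isOpen_ball ih hx,
      wderiv_Aint (contDiffOn_wderiv_iter isOpen_ball hg n) (j - n) hx]
    have : (j - n - 1 : ℤ) = j - ((n + 1 : ℕ) : ℤ) := by push_cast; ring
    rw [this, Function.iterate_succ_apply']

lemma Aint_mixed_iter {R : ℝ} {f : ℂ → ℂ} (hf : ContDiffOn ℝ (⊤ : ℕ∞) f (ball 0 R))
    (n p : ℕ) (k : ℤ) {z : ℂ} (hz : z ∈ ball (0:ℂ) R) :
    (wderiv^[p] (wderivBar^[n] (Aint k f))) z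
      = Aint (k + n - p) (wderiv^[p] (wderivBar^[n] f)) z := by
  have h1 := Aint_wderivBar_iter hf n k
  have h2 := wderiv_iter_congr isOpen_ball h1 p hz
  rw [h2, Aint_wderiv_iter (contDiffOn_wderivBar_iter isOpen_ball hf n) p (k + n) hz]

lemma mem_ball_rot {R : ℝ} {z : ℂ} (hzR : ‖z‖ < R) (t : ℝ) :
    Complex.exp (Complex.I * t) * z ∈ ball (0:ℂ) R := by
  simp only [mem_ball, Complex.dist_eq, sub_zero, norm_mul, abs_rot, one_mul]
  exact hzR

lemma mvLHS_Aint {R : ℝ} {f : ℂ → ℂ} (hf : ContDiffOn ℝ (⊤ : ℕ∞) f (Metric.ball 0 R))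
    (m s : ℕ) (r : ℝ) (k : ℤ) {z : ℂ} (hz : z ∈ Metric.ball (0:ℂ) R) :
    mvLHS m s r (Aint k f) z = (1 / (2 * (Real.pi : ℂ))) *
      ∫ t in (-Real.pi)..Real.pi,
        mvLHS m s r f (Complex.exp (Complex.I * t) * z) *
          Complex.exp (-Complex.I * ((k + s : ℤ) : ℂ) * t) := by
  have hzR : ‖z‖ < R := by simpa [Complex.dist_eq] using hz
  have hcont : ∀ n p : ℕ, Continuous fun t : ℝ =>
      (wderiv^[p] (wderivBar^[n] f)) (Complex.exp (Complex.I * t) * z) := fun n p =>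
    ((contDiffOn_wderiv_iter isOpen_ball (contDiffOn_wderivBar_iter isOpen_ball hf n)
      p).continuousOn).comp_continuous (continuous_rot z) (mem_ball_rot hzR)
  have hintg : ∀ n : ℕ, IntervalIntegrable (fun t : ℝ =>
      (1 / (2 * (Real.pi : ℂ))) *
        (((r : ℂ) ^ (2*n+2) / (2 * ((n-s).factorial : ℂ) * ((n+1).factorial : ℂ))) *
          ((wderiv^[n-s] (wderivBar^[n] f)) (Complex.exp (Complex.I*t)*z) *
            Complex.exp (-Complex.I * ((k + s : ℤ) : ℂ) * t)))) volume (-Real.pi) Real.pi := by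
    intro n
    exact (continuous_const.mul (continuous_const.mul
      ((hcont n (n-s)).mul (continuous_weight (k+s))))).intervalIntegrable _ _
  rw [← intervalIntegral.integral_const_mul]
  have hx : ∀ t : ℝ,
      (1 / (2 * (Real.pi : ℂ))) * (mvLHS m s r f (Complex.exp (Complex.I * t) * z) *
        Complex.exp (-Complex.I * ((k + s : ℤ) : ℂ) * t))
      = ∑ n ∈ Finset.Icc s (m-1),
        (1 / (2 * (Real.pi : ℂ))) *
          (((r : ℂ) ^ (2*n+2) / (2 * ((n-s).factorial : ℂ) * ((n+1).factorial : ℂ))) *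
            ((wderiv^[n-s] (wderivBar^[n] f)) (Complex.exp (Complex.I*t)*z) *
              Complex.exp (-Complex.I * ((k + s : ℤ) : ℂ) * t))) := by
    intro t
    rw [mvLHS, Finset.sum_mul, Finset.mul_sum]
    exact Finset.sum_congr rfl fun n _ => by ring
  rw [intervalIntegral.integral_congr (fun t _ => hx t),
    intervalIntegral.integral_finset_sum (fun n _ => hintg n), mvLHS]
  refine Finset.sum_congr rfl fun n hn => ?_
  have hns : s ≤ n := (Finset.mem_Icc.1 hn).1
  have hidx : (k + (n:ℤ)) - ((n - s : ℕ) : ℤ) = ((k + s : ℤ)) := by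
    rw [Nat.cast_sub hns]; ring
  rw [Aint_mixed_iter hf n (n - s) k hz, hidx, Aint]
  have e1 : ∀ t : ℝ, (1 / (2 * (Real.pi : ℂ))) *
      (((r : ℂ) ^ (2*n+2) / (2 * ((n-s).factorial : ℂ) * ((n+1).factorial : ℂ))) *
        ((wderiv^[n-s] (wderivBar^[n] f)) (Complex.exp (Complex.I*t)*z) *
          Complex.exp (-Complex.I * ((k + s : ℤ) : ℂ) * t)))
      = ((1 / (2 * (Real.pi : ℂ))) *
          ((r : ℂ) ^ (2*n+2) / (2 * ((n-s).factorial : ℂ) * ((n+1).factorial : ℂ)))) *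
        ((wderiv^[n-s] (wderivBar^[n] f)) (Complex.exp (Complex.I*t)*z) *
          Complex.exp (-Complex.I * ((k + s : ℤ) : ℂ) * t)) := fun t => by ring
  rw [intervalIntegral.integral_congr (fun t _ => e1 t),
    intervalIntegral.integral_const_mul]
  ring

lemma rot_preimage (t : ℝ) (z : ℂ) (r : ℝ) :
    (fun ζ : ℂ => Complex.exp (Complex.I * t) * ζ) ⁻¹'
        (Metric.closedBall (Complex.exp (Complex.I * t) * z) r)
      = Metric.closedBall z r := by
  ext ζ
  simp only [Set.mem_preimage, Metric.mem_closedBall, Complex.dist_eq]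
  rw [show Complex.exp (Complex.I * t) * ζ - Complex.exp (Complex.I * t) * z
      = Complex.exp (Complex.I * t) * (ζ - z) by ring, norm_mul, abs_rot, one_mul]

lemma rot_setIntegral (t : ℝ) (g : ℂ → ℂ) (z : ℂ) (r : ℝ) :
    ∫ ζ in Metric.closedBall (Complex.exp (Complex.I * t) * z) r, g ζ
      = ∫ ζ in Metric.closedBall z r, g (Complex.exp (Complex.I * t) * ζ) := by
  have hrot : ((rotation (Circle.exp t)) : ℂ → ℂ) = fun ζ => Complex.exp (Complex.I * t) * ζ := by
    funext ζ
    rw [rotation_apply, Circle.coe_exp, mul_comm (t : ℂ) Complex.I]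
  have hmp : MeasurePreserving (rotation (Circle.exp t)) volume volume :=
    (rotation (Circle.exp t)).measurePreserving
  have hemb : MeasurableEmbedding ((rotation (Circle.exp t)) : ℂ → ℂ) :=
    (rotation (Circle.exp t)).toHomeomorph.measurableEmbedding
  have := hmp.setIntegral_preimage_emb hemb g
    (Metric.closedBall (Complex.exp (Complex.I * t) * z) r)
  rw [hrot] at this
  rw [← this, rot_preimage]

lemma mvRHS_Aint {R r : ℝ} (hr : 0 < r) {f : ℂ → ℂ} (hfc : ContinuousOn f (ball 0 R))
    (s : ℕ) (k : ℤ) {z : ℂ} (hz : ‖z‖ < R - r) :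
    mvRHS s r (Aint k f) z = (1 / (2 * (Real.pi : ℂ))) *
      ∫ t in (-Real.pi)..Real.pi,
        mvRHS s r f (Complex.exp (Complex.I * t) * z) *
          Complex.exp (-Complex.I * ((k + s : ℤ) : ℂ) * t) := by
  have hpi : (-Real.pi) ≤ Real.pi := by linarith [Real.pi_pos]
  set B := Metric.closedBall z r with hB
  have hBsub : ∀ ζ ∈ B, ∀ t : ℝ, Complex.exp (Complex.I * t) * ζ ∈ ball (0:ℂ) R := by
    intro ζ hζ t
    simp only [hB, Metric.mem_closedBall, Complex.dist_eq] at hζ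
    simp only [mem_ball, Complex.dist_eq, sub_zero, norm_mul, abs_rot, one_mul]
    calc ‖ζ‖ = ‖z + (ζ - z)‖ := by ring_nf
    _ ≤ ‖z‖ + ‖ζ - z‖ := norm_add_le _ _
    _ < R := by linarith
  -- inner expansion
  have h2 : ∀ ζ : ℂ, Aint k f ζ * (ζ - z) ^ s
      = (1 / (2 * (Real.pi : ℂ))) * ∫ t in (-Real.pi)..Real.pi,
          f (Complex.exp (Complex.I * t) * ζ) * (ζ - z) ^ s *
            Complex.exp (-Complex.I * k * t) := by
    intro ζ
    rw [Aint, mul_assoc, ← intervalIntegral.integral_mul_const]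
    congr 1
    exact intervalIntegral.integral_congr fun t _ => by ring
  -- uncurried integrand
  set H : ℂ → ℝ → ℂ := fun ζ t =>
    f (Complex.exp (Complex.I * t) * ζ) * (ζ - z) ^ s * Complex.exp (-Complex.I * k * t)
    with hH
  have hBmeas : MeasurableSet B := measurableSet_closedBall
  -- integrability of uncurry H
  have hcont : ContinuousOn (Function.uncurry H)
      (B ×ˢ (Set.univ : Set ℝ)) := by
    have hc1 : Continuous fun p : ℂ × ℝ => Complex.exp (Complex.I * p.2) * p.1 :=
      (Complex.continuous_exp.comp (continuous_const.mul
        (Complex.continuous_ofReal.comp continuous_snd))).mul continuous_fst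
    have hmap : Set.MapsTo (fun p : ℂ × ℝ => Complex.exp (Complex.I * p.2) * p.1)
        (B ×ˢ (Set.univ : Set ℝ)) (ball (0:ℂ) R) := by
      intro p hp
      exact hBsub p.1 hp.1 p.2
    have hA : ContinuousOn (fun p : ℂ × ℝ => f (Complex.exp (Complex.I * p.2) * p.1))
        (B ×ˢ (Set.univ : Set ℝ)) := hfc.comp hc1.continuousOn hmap
    exact (hA.mul (((continuous_fst.sub continuous_const).pow s).continuousOn)).mul
      ((continuous_weight k).comp continuous_snd).continuousOn
  obtain ⟨M, hM⟩ : ∃ M, ∀ u ∈ Metric.closedBall (0:ℂ) (‖z‖ + r), ‖f u‖ ≤ M := by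
    apply (isCompact_closedBall (0:ℂ) (‖z‖ + r)).exists_bound_of_continuousOn
    apply hfc.mono
    intro u hu
    simp only [Metric.mem_closedBall, mem_ball, Complex.dist_eq, sub_zero] at *
    linarith
  have hIntH : Integrable (Function.uncurry H)
      ((volume.restrict B).prod (volume.restrict (Set.Ioc (-Real.pi) Real.pi))) := by
    rw [Measure.prod_restrict]
    constructor
    · exact (hcont.mono (fun p hp => ⟨hp.1, Set.mem_univ _⟩)).aestronglyMeasurable
        (hBmeas.prod measurableSet_Ioc)
    · apply MeasureTheory.HasFiniteIntegral.restrict_of_bounded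
        (C := M * r ^ s)
      · rw [Measure.prod_prod]
        exact ENNReal.mul_lt_top measure_closedBall_lt_top measure_Ioc_lt_top
      · rw [MeasureTheory.ae_restrict_iff' (hBmeas.prod measurableSet_Ioc)]
        refine Filter.Eventually.of_forall fun p hp => ?_
        obtain ⟨hp1, _⟩ := hp
        have hd : ‖p.1 - z‖ ≤ r := by
          simpa [hB, Metric.mem_closedBall, Complex.dist_eq] using hp1
        have hu : Complex.exp (Complex.I * p.2) * p.1 ∈
            Metric.closedBall (0:ℂ) (‖z‖ + r) := by
          simp only [Metric.mem_closedBall, Complex.dist_eq, sub_zero, norm_mul, abs_rot,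
            one_mul]
          calc ‖p.1‖ = ‖z + (p.1 - z)‖ := by ring_nf
          _ ≤ ‖z‖ + ‖p.1 - z‖ := norm_add_le _ _
          _ ≤ ‖z‖ + r := by linarith
        have hHp : Function.uncurry H p
            = f (Complex.exp (Complex.I * p.2) * p.1) * (p.1 - z) ^ s *
              Complex.exp (-Complex.I * k * p.2) := rfl
        rw [hHp, norm_mul, norm_mul, norm_pow]
        have habs1 : ‖Complex.exp (-Complex.I * k * p.2)‖ = 1 := by
          rw [Complex.norm_exp]; simp
        rw [habs1, mul_one]
        have hb1 : ‖f (Complex.exp (Complex.I * p.2) * p.1)‖ ≤ M := hM _ hu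
        have hb2 : ‖p.1 - z‖ ^ s ≤ r ^ s :=
          pow_le_pow_left₀ (norm_nonneg _) (by simpa using hd) s
        exact mul_le_mul hb1 hb2 (pow_nonneg (norm_nonneg _) s) ((norm_nonneg _).trans hb1)
  -- main chain
  rw [mvRHS]
  rw [MeasureTheory.setIntegral_congr_fun hBmeas (fun ζ _ => h2 ζ)]
  rw [MeasureTheory.integral_const_mul]
  have hio : ∀ ζ : ℂ, (∫ t in (-Real.pi)..Real.pi, H ζ t)
      = ∫ t in Set.Ioc (-Real.pi) Real.pi, H ζ t := fun ζ =>
    intervalIntegral.integral_of_le hpi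
  rw [MeasureTheory.setIntegral_congr_fun hBmeas (fun ζ _ => hio ζ)]
  rw [MeasureTheory.integral_integral_swap hIntH]
  -- now pointwise in t
  have hpt : ∀ t : ℝ, (∫ ζ in B, H ζ t)
      = mvRHS s r f (Complex.exp (Complex.I * t) * z) *
          Complex.exp (-Complex.I * ((k + s : ℤ) : ℂ) * t) * (2 * (Real.pi : ℂ)) := by
    intro t
    rw [mvRHS, rot_setIntegral t _ z r]
    have hes : Complex.exp (Complex.I * t) ^ s *
        Complex.exp (-Complex.I * ((k + s : ℤ) : ℂ) * t) = Complex.exp (-Complex.I * k * t) := by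
      rw [← Complex.exp_nat_mul, ← Complex.exp_add]
      congr 1; push_cast; ring
    have hre : ∀ J w : ℂ, 1 / (2*(Real.pi:ℂ)) * J * w * (2*(Real.pi:ℂ)) = J * w := by
      intro J w
      have hπ : ((Real.pi : ℂ)) ≠ 0 := Complex.ofReal_ne_zero.2 Real.pi_ne_zero
      field_simp
    rw [hre, ← MeasureTheory.integral_mul_const]
    apply MeasureTheory.setIntegral_congr_fun hBmeas
    intro ζ _
    have hexp : (Complex.exp (Complex.I * t) * ζ - Complex.exp (Complex.I * t) * z) ^ s
        = Complex.exp (Complex.I * t) ^ s * (ζ - z) ^ s := by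
      rw [show Complex.exp (Complex.I * t) * ζ - Complex.exp (Complex.I * t) * z
          = Complex.exp (Complex.I * t) * (ζ - z) by ring, mul_pow]
    show f (Complex.exp (Complex.I * t) * ζ) * (ζ - z) ^ s *
        Complex.exp (-Complex.I * k * t)
      = f (Complex.exp (Complex.I * t) * ζ) *
          (Complex.exp (Complex.I * t) * ζ - Complex.exp (Complex.I * t) * z) ^ s *
          Complex.exp (-Complex.I * ((k + s : ℤ) : ℂ) * t)
    rw [hexp]
    linear_combination (-(f (Complex.exp (Complex.I * t) * ζ) * (ζ - z)^s)) * hes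
  rw [show (∫ t in Set.Ioc (-Real.pi) Real.pi, ∫ ζ in B, H ζ t)
      = ∫ t in Set.Ioc (-Real.pi) Real.pi,
          mvRHS s r f (Complex.exp (Complex.I * t) * z) *
            Complex.exp (-Complex.I * ((k + s : ℤ) : ℂ) * t) * (2 * (Real.pi : ℂ)) from
    MeasureTheory.setIntegral_congr_fun measurableSet_Ioc fun t _ => hpt t]
  rw [← intervalIntegral.integral_of_le hpi, intervalIntegral.integral_mul_const]
  have hπ : ((Real.pi : ℂ)) ≠ 0 := Complex.ofReal_ne_zero.2 Real.pi_ne_zero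
  field_simp
  congr 1; funext x; ring_nf

lemma Fk_eq_Aint (f : ℂ → ℂ) (k : ℤ) :
    (fun w => fourierCoef f k (‖w‖) *
        Complex.exp (Complex.I * k * Complex.arg w)) = Aint k f := by
  funext w
  set ρ : ℝ := ‖w‖ with hρ
  set φ : ℝ := Complex.arg w with hφ
  set G : ℝ → ℂ := fun u => f ((ρ:ℂ) * Complex.exp (Complex.I * u)) *
    Complex.exp (-Complex.I * k * u) with hG
  have hper : Function.Periodic G (2 * Real.pi) := by
    intro u
    have e1 : Complex.exp (Complex.I * ((u + 2*Real.pi : ℝ) : ℂ))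
        = Complex.exp (Complex.I * u) := by
      rw [show Complex.I * ((u + 2*Real.pi : ℝ) : ℂ)
          = Complex.I * u + 2*Real.pi*Complex.I by push_cast; ring,
        Complex.exp_add, Complex.exp_two_pi_mul_I, mul_one]
    have e2 : Complex.exp (-Complex.I * k * ((u + 2*Real.pi : ℝ) : ℂ))
        = Complex.exp (-Complex.I * k * u) := by
      rw [show -Complex.I * (k:ℂ) * ((u + 2*Real.pi : ℝ) : ℂ)
          = -Complex.I * k * u + ((-k : ℤ) : ℂ) * (2*Real.pi*Complex.I) by push_cast; ring,
        Complex.exp_add, Complex.exp_int_mul_two_pi_mul_I, mul_one]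
    show f ((ρ:ℂ) * Complex.exp (Complex.I * ((u + 2*Real.pi : ℝ) : ℂ))) *
        Complex.exp (-Complex.I * k * ((u + 2*Real.pi : ℝ) : ℂ)) = G u
    rw [e1, e2]
  have hkey : ∀ t : ℝ, f (Complex.exp (Complex.I * t) * w) * Complex.exp (-Complex.I * k * t)
      = G (t + φ) * Complex.exp (Complex.I * k * (φ : ℂ)) := by
    intro t
    have hw : ((ρ : ℝ) : ℂ) * Complex.exp ((φ : ℝ) * Complex.I) = w :=
      Complex.norm_mul_exp_arg_mul_I w
    have e3 : Complex.exp (Complex.I * t) * w = (ρ:ℂ) * Complex.exp (Complex.I * ((t + φ : ℝ) : ℂ)) := by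
      rw [← hw, show Complex.I * ((t + φ : ℝ) : ℂ) = Complex.I * t + (φ:ℂ) * Complex.I by
        push_cast; ring, Complex.exp_add]
      ring
    show _ = f ((ρ:ℂ) * Complex.exp (Complex.I * ((t + φ : ℝ):ℂ))) *
        Complex.exp (-Complex.I * k * ((t + φ : ℝ):ℂ)) * Complex.exp (Complex.I * k * (φ : ℂ))
    rw [e3, mul_assoc (f _), ← Complex.exp_add]
    congr 2
    push_cast
    ring
  rw [fourierCoef, Aint, mul_assoc]
  congr 1
  rw [intervalIntegral.integral_congr (fun t (_ : t ∈ Set.uIcc _ _) => hkey t),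
    intervalIntegral.integral_mul_const, intervalIntegral.integral_comp_add_right G φ]
  congr 1
  have := hper.intervalIntegral_add_eq (-Real.pi + φ) (-Real.pi)
  rw [show -Real.pi + φ + 2*Real.pi = Real.pi + φ by ring,
    show -Real.pi + (2:ℝ)*Real.pi = Real.pi by ring] at this
  rw [show Real.pi + φ = φ + Real.pi by ring] at this ⊢
  exact this.symm

theorem fourier_component_satisfies_mean_value (m s : ℕ) (hs : s < m) (r R : ℝ)
    (hr : 0 < r) (hR : r < R) (f : ℂ → ℂ)
    (hf : ContDiffOn ℝ (⊤ : ℕ∞) f (Metric.ball (0 : ℂ) R))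
    (heq : ∀ z : ℂ, ‖z‖ < R - r → mvLHS m s r f z = mvRHS s r f z) (k : ℤ) :
    ∀ z : ℂ, ‖z‖ < R - r →
      mvLHS m s r
        (fun w => fourierCoef f k (‖w‖) * Complex.exp (Complex.I * k * Complex.arg w)) z =
      mvRHS s r
        (fun w => fourierCoef f k (‖w‖) * Complex.exp (Complex.I * k * Complex.arg w)) z := by
  intro z hz
  have hzball : z ∈ Metric.ball (0:ℂ) R := by
    simp only [mem_ball, Complex.dist_eq, sub_zero]
    linarith
  rw [Fk_eq_Aint f k, mvLHS_Aint hf m s r k hzball, mvRHS_Aint hr hf.continuousOn s k hz]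
  congr 1
  apply intervalIntegral.integral_congr
  intro t _
  have habs : ‖Complex.exp (Complex.I * t) * z‖ < R - r := by
    rw [norm_mul, abs_rot, one_mul]; exact hz
  show mvLHS m s r f (Complex.exp (Complex.I * t) * z) * _ = _
  rw [heq _ habs]
end

section
/- Fix m ∈ ℕ and s ∈ {0,…,m−1}. If f : ℂ → ℂ is radial (f(z) = h(|z|²) for some smooth h), smooth, and satisfies (∂/∂z)^{m−s}(∂/∂z̄)^m f = 0 on a disk D_R, then h is a polynomial of degree at most m−1 on [0, R²); i.e., f(z) = ∑_{p=0}^{m−1} c_p |z|^{2p} on D_R. -/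
open MeasureTheory Complex

lemma radial_fderiv_apply (g : ℝ → ℂ) (hg : Differentiable ℝ g) (n : ℕ) (z w : ℂ) :
    fderiv ℝ (fun w : ℂ => w ^ n * g (Complex.normSq w)) z w =
      ((2*z.re*w.re + 2*z.im*w.im : ℝ) : ℂ) * (z ^ n * deriv g (Complex.normSq z))
        + g (Complex.normSq z) * ((n:ℂ) * z^(n-1) * w) := by
  have hq : HasFDerivAt (fun w : ℂ => Complex.normSq w)
      ((z.re • Complex.reCLM + z.re • Complex.reCLM) + (z.im • Complex.imCLM + z.im • Complex.imCLM)) z := by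
    have := ((Complex.reCLM.hasFDerivAt (x := z)).mul (Complex.reCLM.hasFDerivAt)).add
      ((Complex.imCLM.hasFDerivAt (x := z)).mul (Complex.imCLM.hasFDerivAt))
    simp only [Complex.reCLM_apply, Complex.imCLM_apply] at this
    refine this.congr_of_eventuallyEq (Filter.Eventually.of_forall fun x => ?_)
    simp [Complex.normSq_apply]
  have hgF : HasFDerivAt g (ContinuousLinearMap.smulRight (1 : ℝ →L[ℝ] ℝ) (deriv g (Complex.normSq z))) (Complex.normSq z) :=
    (hg (Complex.normSq z)).hasDerivAt.hasFDerivAt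
  have hgq := hgF.comp z hq
  have H := (((hasDerivAt_pow n z).complexToReal_fderiv).mul hgq).fderiv
  rw [show (fun w : ℂ => w ^ n * g (Complex.normSq w)) = ((fun x : ℂ => x ^ n) * (g ∘ Complex.normSq)) from rfl, H]
  simp [ContinuousLinearMap.smul_apply, Complex.real_smul, smul_eq_mul, Function.comp]
  ring

lemma conj_trick (z : ℂ) : z * ((z.re : ℂ) - (z.im : ℂ) * Complex.I) = ((Complex.normSq z : ℝ) : ℂ) := by
  have h1 : ((z.re : ℂ) - (z.im : ℂ) * Complex.I) = (starRingEnd ℂ) z := by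
    apply Complex.ext <;> simp
  rw [h1, Complex.mul_conj]

lemma wderivBar_pow_mul (g : ℝ → ℂ) (hg : Differentiable ℝ g) (n : ℕ) (z : ℂ) :
    wderivBar (fun w => w ^ n * g (Complex.normSq w)) z
      = z ^ (n + 1) * deriv g (Complex.normSq z) := by
  unfold wderivBar
  rw [radial_fderiv_apply g hg n z 1, radial_fderiv_apply g hg n z Complex.I]
  simp only [Complex.one_re, Complex.one_im, Complex.I_re, Complex.I_im]
  push_cast
  have h2 : (Complex.I : ℂ) ^ 2 = -1 := Complex.I_sq
  have h3 : (z.re : ℂ) + (z.im : ℂ) * Complex.I = z := Complex.re_add_im z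
  linear_combination (z ^ n * deriv g (Complex.normSq z)) * h3 + ((n:ℂ) * z^(n-1) * g (Complex.normSq z) / 2) * h2

lemma wderiv_pow_mul (g : ℝ → ℂ) (hg : Differentiable ℝ g) (a : ℕ) (z : ℂ) :
    wderiv (fun w => w ^ (a + 1) * g (Complex.normSq w)) z
      = z ^ a * (((a : ℂ) + 1) * g (Complex.normSq z)
          + ((Complex.normSq z : ℝ) : ℂ) * deriv g (Complex.normSq z)) := by
  unfold wderiv
  rw [radial_fderiv_apply g hg (a+1) z 1, radial_fderiv_apply g hg (a+1) z Complex.I]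
  simp only [Complex.one_re, Complex.one_im, Complex.I_re, Complex.I_im, Nat.add_sub_cancel]
  push_cast
  have h2 : (Complex.I : ℂ) ^ 2 = -1 := Complex.I_sq
  have h4 : z ^ (a+1) * ((z.re : ℂ) - (z.im : ℂ) * Complex.I) = z ^ a * ((Complex.normSq z : ℝ) : ℂ) := by
    rw [pow_succ, mul_assoc, conj_trick]
  linear_combination (deriv g (Complex.normSq z)) * h4 - ((a:ℂ)+1) * z^a * g (Complex.normSq z) / 2 * h2

open scoped ContDiff in
lemma one_le_inf : (∞ : WithTop ℕ∞) ≠ 0 := by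
  simp

open scoped ContDiff in
lemma contDiff_deriv' {u : ℝ → ℂ} (hu : ContDiff ℝ ∞ u) : ContDiff ℝ ∞ (deriv u) := by
  have := hu.iterate_deriv 1
  rwa [Function.iterate_one] at this

open scoped ContDiff in
lemma contDiff_iteratedDeriv' {u : ℝ → ℂ} (hu : ContDiff ℝ ∞ u) (n : ℕ) :
    ContDiff ℝ ∞ (iteratedDeriv n u) := by
  rw [iteratedDeriv_eq_iterate]; exact hu.iterate_deriv n

open scoped ContDiff in
lemma iterBar (h : ℝ → ℂ) (hh : ContDiff ℝ ∞ h) (n : ℕ) :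
    wderivBar^[n] (fun w => h (Complex.normSq w))
      = fun z => z ^ n * iteratedDeriv n h (Complex.normSq z) := by
  induction n with
  | zero => funext z; simp
  | succ n ih =>
    funext z
    rw [Function.iterate_succ_apply', ih]
    have hd : Differentiable ℝ (iteratedDeriv n h) :=
      (contDiff_iteratedDeriv' hh n).differentiable one_le_inf
    rw [wderivBar_pow_mul (iteratedDeriv n h) hd n z, ← iteratedDeriv_succ]

noncomputable def Gseq (h : ℝ → ℂ) (m : ℕ) : ℕ → ℝ → ℂ
  | 0 => iteratedDeriv m h
  | (k+1) => fun x => ((m - k : ℕ) : ℂ) * Gseq h m k x + (x : ℂ) * deriv (Gseq h m k) x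

open scoped ContDiff in
lemma Gseq_contDiff (h : ℝ → ℂ) (hh : ContDiff ℝ ∞ h) (m : ℕ) :
    ∀ k, ContDiff ℝ ∞ (Gseq h m k) := by
  intro k
  induction k with
  | zero => exact contDiff_iteratedDeriv' hh m
  | succ k ih =>
    show ContDiff ℝ ∞ fun x => ((m - k : ℕ) : ℂ) * Gseq h m k x + (x : ℂ) * deriv (Gseq h m k) x
    exact (contDiff_const.mul ih).add
      ((Complex.ofRealCLM.contDiff.mul (contDiff_deriv' ih)))

open scoped ContDiff in
lemma iterW (h : ℝ → ℂ) (hh : ContDiff ℝ ∞ h) (m : ℕ) :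
    ∀ k, k ≤ m →
      wderiv^[k] (wderivBar^[m] (fun w => h (Complex.normSq w)))
        = fun z => z ^ (m - k) * Gseq h m k (Complex.normSq z) := by
  intro k
  induction k with
  | zero => intro _; simpa [Gseq] using iterBar h hh m
  | succ k ih =>
    intro hk
    have hk' : k ≤ m := by omega
    funext z
    rw [Function.iterate_succ_apply', ih hk']
    have hmk : m - k = (m - (k+1)) + 1 := by omega
    have hd : Differentiable ℝ (Gseq h m k) :=
      (Gseq_contDiff h hh m k).differentiable one_le_inf
    rw [show (fun z : ℂ => z ^ (m - k) * Gseq h m k (Complex.normSq z))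
        = (fun z : ℂ => z ^ ((m - (k+1)) + 1) * Gseq h m k (Complex.normSq z)) by rw [← hmk]]
    rw [wderiv_pow_mul (Gseq h m k) hd (m - (k+1)) z]
    show _ = z ^ (m - (k+1)) *
        (((m - k : ℕ) : ℂ) * Gseq h m k (Complex.normSq z)
          + ((Complex.normSq z : ℝ) : ℂ) * deriv (Gseq h m k) (Complex.normSq z))
    have hcast : ((m - (k+1) : ℕ) : ℂ) + 1 = ((m - k : ℕ) : ℂ) := by
      have : (m - (k+1)) + 1 = m - k := by omega
      exact_mod_cast congrArg (Nat.cast : ℕ → ℂ) this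
    rw [hcast]

lemma const_of_deriv_zero {s : Set ℝ} (hs : Convex ℝ s) (φ : ℝ → ℂ) (hφ : Differentiable ℝ φ)
    (h0 : ∀ x ∈ s, deriv φ x = 0) {x y : ℝ} (hx : x ∈ s) (hy : y ∈ s) : φ x = φ y := by
  have key : ∀ x ∈ s, DifferentiableAt ℝ φ x := fun x _ => hφ x
  have bound : ∀ t ∈ s, ‖fderiv ℝ φ t‖ ≤ 0 := by
    intro t ht
    have hD : HasDerivAt φ 0 t := by
      have := (hφ t).hasDerivAt
      rwa [h0 t ht] at this
    rw [hD.hasFDerivAt.fderiv]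
    simp
  have hle := hs.norm_image_sub_le_of_norm_fderiv_le key bound hy hx
  have habs : ‖φ x - φ y‖ = 0 :=
    le_antisymm (by simpa using hle) (norm_nonneg _)
  rw [← sub_eq_zero]
  exact_mod_cast norm_eq_zero.mp habs

lemma zero_ext {B : ℝ} (hB : 0 < B) (u : ℝ → ℂ) (hu : Continuous u)
    (h : ∀ x ∈ Set.Ioo 0 B, u x = 0) : ∀ x ∈ Set.Ico 0 B, u x = 0 := by
  intro x hx
  rcases eq_or_lt_of_le hx.1 with h0 | h0
  · have hne : (nhdsWithin (0:ℝ) (Set.Ioo 0 B)).NeBot := by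
      apply mem_closure_iff_nhdsWithin_neBot.1
      rw [closure_Ioo (ne_of_lt hB)]
      exact ⟨le_refl 0, hB.le⟩
    have t1 : Filter.Tendsto u (nhdsWithin 0 (Set.Ioo 0 B)) (nhds (u 0)) :=
      (hu.continuousAt).continuousWithinAt
    have t2 : Filter.Tendsto u (nhdsWithin 0 (Set.Ioo 0 B)) (nhds 0) := by
      apply Filter.Tendsto.congr' _ tendsto_const_nhds
      filter_upwards [self_mem_nhdsWithin] with y hy using (h y hy).symm
    rw [← h0]
    exact tendsto_nhds_unique t1 t2
  · exact h x ⟨h0, hx.2⟩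

open scoped ContDiff in
lemma step_lemma {B : ℝ} (hB : 0 < B) (b : ℕ) (u : ℝ → ℂ) (hu : ContDiff ℝ ∞ u)
    (hyp : ∀ x ∈ Set.Ico 0 B, ((b:ℂ)+1) * u x + (x:ℂ) * deriv u x = 0) :
    ∀ x ∈ Set.Ico 0 B, u x = 0 := by
  set φ : ℝ → ℂ := fun x => (x:ℂ)^(b+1) * u x with hφdef
  have hud : Differentiable ℝ u := hu.differentiable one_le_inf
  have hophi : ∀ x : ℝ, HasDerivAt φ
      ((((b:ℂ)+1) * (x:ℂ)^b) * u x + (x:ℂ)^(b+1) * deriv u x) x := by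
    intro x
    have hr : HasDerivAt (fun x : ℝ => (x:ℂ)) 1 x := by
      simpa using (hasDerivAt_id x).ofReal_comp
    have h1 : HasDerivAt (fun x : ℝ => ((x:ℂ))^(b+1)) (((b:ℂ)+1) * (x:ℂ)^b) x := by
      have := (hasDerivAt_pow (b+1) ((x : ℂ))).comp_ofReal
      simpa using this
    exact h1.mul ((hud x).hasDerivAt)
  have hφdiff : Differentiable ℝ φ := fun x => (hophi x).differentiableAt
  have hderiv0 : ∀ x ∈ Set.Ioo 0 B, deriv φ x = 0 := by
    intro x hx
    rw [(hophi x).deriv]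
    have hy := hyp x ⟨hx.1.le, hx.2⟩
    calc (((b:ℂ)+1) * (x:ℂ)^b) * u x + (x:ℂ)^(b+1) * deriv u x
        = (x:ℂ)^b * (((b:ℂ)+1) * u x + (x:ℂ) * deriv u x) := by ring
      _ = 0 := by rw [hy, mul_zero]
  have hmid : B/2 ∈ Set.Ioo 0 B := ⟨by linarith, by linarith⟩
  have hconst : ∀ x ∈ Set.Ioo 0 B, φ x = φ (B/2) := fun x hx =>
    const_of_deriv_zero (convex_Ioo 0 B) φ hφdiff hderiv0 hx hmid
  have hφcont : Continuous φ := by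
    exact (Complex.continuous_ofReal.pow (b+1)).mul (hu.continuous)
  have hφ0 : φ 0 = 0 := by simp [hφdef]
  have hc0 : φ (B/2) = 0 := by
    have hne : (nhdsWithin (0:ℝ) (Set.Ioo 0 B)).NeBot := by
      apply mem_closure_iff_nhdsWithin_neBot.1
      rw [closure_Ioo (ne_of_lt hB)]
      exact ⟨le_refl 0, hB.le⟩
    have t1 : Filter.Tendsto φ (nhdsWithin 0 (Set.Ioo 0 B)) (nhds (0:ℂ)) := by
      rw [← hφ0]
      exact (hφcont.continuousAt).continuousWithinAt
    have t2 : Filter.Tendsto φ (nhdsWithin 0 (Set.Ioo 0 B)) (nhds (φ (B/2))) := by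
      apply Filter.Tendsto.congr' _ tendsto_const_nhds
      filter_upwards [self_mem_nhdsWithin] with y hy using (hconst y hy).symm
    exact (tendsto_nhds_unique t1 t2).symm
  have hioo : ∀ x ∈ Set.Ioo 0 B, u x = 0 := by
    intro x hx
    have := (hconst x hx).trans hc0
    have hxne : ((x:ℂ))^(b+1) ≠ 0 := pow_ne_zero _ (by exact_mod_cast ne_of_gt hx.1)
    exact (mul_eq_zero.1 this).resolve_left hxne
  exact zero_ext hB u hu.continuous hioo

open scoped ContDiff in
lemma descend (h : ℝ → ℂ) (hh : ContDiff ℝ ∞ h) (m s : ℕ) (hs : s < m) {B : ℝ} (hB : 0 < B)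
    (hzero : ∀ x ∈ Set.Ico 0 B, Gseq h m (m - s) x = 0) :
    ∀ x ∈ Set.Ico 0 B, iteratedDeriv m h x = 0 := by
  have key : ∀ j, j ≤ m - s → ∀ x ∈ Set.Ico 0 B, Gseq h m (m - s - j) x = 0 := by
    intro j
    induction j with
    | zero => intro _; simpa using hzero
    | succ j ih =>
      intro hj
      have hj' : j ≤ m - s := by omega
      have IH := ih hj'
      set j' := m - s - (j+1) with hj'def
      have hjj : m - s - j = j' + 1 := by omega
      have hb : m - j' = (m - j' - 1) + 1 := by omega
      set b := m - j' - 1 with hbdef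
      apply step_lemma hB b (Gseq h m j') (Gseq_contDiff h hh m j')
      intro x hx
      have hval := IH x hx
      rw [hjj] at hval
      rw [show Gseq h m (j'+1) x
          = ((m - j' : ℕ) : ℂ) * Gseq h m j' x + (x:ℂ) * deriv (Gseq h m j') x from rfl] at hval
      have hcast : ((b:ℂ)+1) = ((m - j' : ℕ) : ℂ) := by
        rw [hbdef]
        exact_mod_cast congrArg (Nat.cast : ℕ → ℂ) hb.symm
      rw [hcast]
      exact hval
  have hfin := key (m - s) (le_refl _)
  simpa [Gseq] using hfin

open scoped ContDiff in
lemma taylor_poly : ∀ (m : ℕ) (h : ℝ → ℂ), ContDiff ℝ ∞ h → ∀ B : ℝ, 0 < B →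
    (∀ x ∈ Set.Ico 0 B, iteratedDeriv m h x = 0) →
    ∀ x ∈ Set.Ico 0 B,
      h x = ∑ p ∈ Finset.range m, (iteratedDeriv p h 0 / (p.factorial : ℂ)) * (x:ℂ)^p := by
  intro m
  induction m with
  | zero => intro h hh B hB h0 x hx; simpa using h0 x hx
  | succ m ih =>
    intro h hh B hB h0 x hx
    have hd : ContDiff ℝ ∞ (deriv h) := contDiff_deriv' hh
    have h0' : ∀ x ∈ Set.Ico 0 B, iteratedDeriv m (deriv h) x = 0 := by
      intro x hx
      rw [← iteratedDeriv_succ']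
      exact h0 x hx
    have IH := ih (deriv h) hd B hB h0'
    set c : ℕ → ℂ := fun p => iteratedDeriv p h 0 / (p.factorial : ℂ) with hc
    set ψ : ℝ → ℂ := fun x => h x - ∑ p ∈ Finset.range (m+1), c p * (x:ℂ)^p with hψ
    have hpoly : ∀ x : ℝ, HasDerivAt (fun x : ℝ => ∑ p ∈ Finset.range (m+1), c p * (x:ℂ)^p)
        (∑ p ∈ Finset.range (m+1), c p * ((p:ℂ) * (x:ℂ)^(p-1))) x := by
      intro x
      apply HasDerivAt.fun_sum
      intro p _
      have := ((hasDerivAt_pow p ((x : ℂ))).comp_ofReal).const_mul (c p)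
      simpa [mul_comm, mul_assoc, mul_left_comm] using this
    have hψd : ∀ x : ℝ, HasDerivAt ψ
        (deriv h x - ∑ p ∈ Finset.range (m+1), c p * ((p:ℂ) * (x:ℂ)^(p-1))) x :=
      fun x => ((hh.differentiable one_le_inf x).hasDerivAt).sub (hpoly x)
    have hψ0 : ∀ x ∈ Set.Ico 0 B, deriv ψ x = 0 := by
      intro x hx
      rw [(hψd x).deriv, IH x hx, sub_eq_zero, Finset.sum_range_succ']
      simp only [Nat.cast_zero, zero_mul, mul_zero, add_zero]
      apply Finset.sum_congr rfl
      intro p _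
      rw [← iteratedDeriv_succ']
      have hfac : ((p+1).factorial : ℂ) = (p.factorial : ℂ) * ((p:ℂ)+1) := by
        rw [Nat.factorial_succ]; push_cast; ring
      have hpf : (p.factorial : ℂ) ≠ 0 := by exact_mod_cast Nat.factorial_ne_zero p
      have hpf1 : ((p:ℂ)+1) ≠ 0 := Nat.cast_add_one_ne_zero p
      simp only [hc]
      rw [hfac]
      field_simp
      rw [Nat.add_sub_cancel]; push_cast; ring
    have hconst := const_of_deriv_zero (convex_Ico 0 B) ψ
      (fun x => (hψd x).differentiableAt) hψ0 hx ⟨le_refl 0, hB⟩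
    have hψzero : ψ 0 = 0 := by
      simp only [hψ, hc]
      rw [Finset.sum_eq_single 0]
      · simp [iteratedDeriv_zero]
      · intro p _ hp
        simp [zero_pow hp]
      · intro habs
        simp at habs
    have : ψ x = 0 := hconst.trans hψzero
    simp only [hψ] at this
    exact sub_eq_zero.mp this


theorem radial_solutions_polynomial (m s : ℕ) (hs : s < m) (R : ℝ) (hR : 0 < R)
    (h : ℝ → ℂ) (hh : ContDiff ℝ (⊤ : ℕ∞) h) (f : ℂ → ℂ)
    (hf : f = fun z => h (‖z‖ ^ 2))
    (heq : ∀ z ∈ Metric.ball (0 : ℂ) R, (wderiv^[m - s] (wderivBar^[m] f)) z = 0) :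
    ∃ c : ℕ → ℂ, ∀ z ∈ Metric.ball (0 : ℂ) R,
      f z = ∑ p ∈ Finset.range m, c p * (‖z‖ : ℂ) ^ (2 * p) := by
  have hh' : ContDiff ℝ (⊤:ℕ∞) h := hh.of_le (by simp)
  have hfn : f = fun w => h (Complex.normSq w) := by
    rw [hf]; funext w; rw [Complex.sq_norm]
  set B := R^2 with hBdef
  have hB : 0 < B := by positivity
  have hiter := iterW h hh' m (m - s) (Nat.sub_le m s)
  have hIoo : ∀ x ∈ Set.Ioo 0 B, Gseq h m (m - s) x = 0 := by
    intro x hx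
    set t := Real.sqrt x with ht
    have htpos : 0 < t := Real.sqrt_pos.2 hx.1
    have htR : t < R := by
      have h1 : t < Real.sqrt B := Real.sqrt_lt_sqrt hx.1.le hx.2
      rwa [hBdef, Real.sqrt_sq hR.le] at h1
    have hzball : (t : ℂ) ∈ Metric.ball (0:ℂ) R := by
      rw [Metric.mem_ball, dist_zero_right]
      simpa [Complex.norm_real, abs_of_pos htpos] using htR
    have hval := heq (t:ℂ) hzball
    rw [hfn, hiter] at hval
    have hval2 : ((t:ℂ)) ^ (m - (m - s)) * Gseq h m (m - s) (Complex.normSq (t:ℂ)) = 0 := hval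
    have hns : Complex.normSq ((t:ℝ):ℂ) = x := by
      rw [Complex.normSq_ofReal, ht, Real.mul_self_sqrt hx.1.le]
    rw [hns] at hval2
    have htne : ((t:ℝ):ℂ) ^ (m - (m - s)) ≠ 0 :=
      pow_ne_zero _ (by exact_mod_cast htpos.ne')
    exact (mul_eq_zero.1 hval2).resolve_left htne
  have hIco := zero_ext hB _ (Gseq_contDiff h hh' m (m-s)).continuous hIoo
  have hitd := descend h hh' m s hs hB hIco
  have htay := taylor_poly m h hh' B hB hitd
  refine ⟨fun p => iteratedDeriv p h 0 / (p.factorial : ℂ), ?_⟩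
  intro z hz
  have habs : ‖z‖ < R := by
    rw [Metric.mem_ball, dist_zero_right] at hz
    simpa using hz
  have hzB : ‖z‖ ^ 2 ∈ Set.Ico 0 B := by
    constructor
    · positivity
    · rw [hBdef]
      have h0 : (0:ℝ) ≤ ‖z‖ := norm_nonneg _
      nlinarith
  have hx := htay _ hzB
  rw [hf]
  simp only
  rw [hx]
  apply Finset.sum_congr rfl
  intro p _
  congr 1
  push_cast
  rw [pow_mul]
end
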